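/- arXiv:math/0611399 — 6 statements merged into one kernel-verified Lean document; each statement's English description precedes it below -/
import Mathlib

section
/- Let 0 ≤ a < b be real numbers and let f : [a,b] → ℝ be a continuous positive function attaining its maximum at a point x₀ ∈ [a,b]. For each natural number n let Sₙ = Σ_{i ∈ ℕ, na ≤ i ≤ nb} exp((n/π)·f(i/n)). Then lim_{n→∞} (π/n)·log(Sₙ) = f(x₀). -/
open Real Filter Finset

set_option maxHeartbeats 1600000 in
/-- tropical summation lemma. For `0 ≤ a < b`, `f` continuous and positive on
`[a,b]` attaining its maximum at `x₀`, the sums `Sₙ = Σ_{i ∈ ℕ, na ≤ i ≤ nb} exp((n/π) f(i/n))`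
satisfy `(π/n) log Sₙ → f x₀`. -/
theorem tropical_sum_limit (a b : ℝ) (ha : 0 ≤ a) (hab : a < b) (f : ℝ → ℝ)
    (hf : ContinuousOn f (Set.Icc a b))
    (hpos : ∀ x ∈ Set.Icc a b, 0 < f x)
    (x₀ : ℝ) (hx₀ : x₀ ∈ Set.Icc a b)
    (hmax : ∀ x ∈ Set.Icc a b, f x ≤ f x₀) :
    Tendsto (fun n : ℕ =>
        Real.pi / n * Real.log (∑ i ∈ Finset.Icc ⌈(n : ℝ) * a⌉₊ ⌊(n : ℝ) * b⌋₊,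
          Real.exp ((n : ℝ) / Real.pi * f ((i : ℝ) / n))))
      atTop (nhds (f x₀)) := by
  have hπ : (0:ℝ) < π := Real.pi_pos
  obtain ⟨hax₀, hx₀b⟩ := hx₀
  set M := f x₀ with hM
  have hMpos : 0 < M := hpos x₀ ⟨hax₀, hx₀b⟩
  set S : ℕ → ℝ := fun n => ∑ i ∈ Finset.Icc ⌈(n : ℝ) * a⌉₊ ⌊(n : ℝ) * b⌋₊,
      Real.exp ((n : ℝ) / Real.pi * f ((i : ℝ) / n)) with hSdef
  -- Lower bound
  have hlow : ∀ ε : ℝ, 0 < ε → ∀ᶠ n : ℕ in atTop, M - ε ≤ π / n * Real.log (S n) := by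
    intro ε hε
    obtain ⟨δ, hδ, hδf⟩ : ∃ δ > 0, ∀ x ∈ Set.Icc a b, |x - x₀| < δ → M - ε < f x := by
      have hc := hf x₀ ⟨hax₀, hx₀b⟩
      rw [Metric.continuousWithinAt_iff] at hc
      obtain ⟨δ, hδ, h⟩ := hc ε hε
      refine ⟨δ, hδ, fun x hx hxd => ?_⟩
      have h2 := h hx (by rwa [Real.dist_eq])
      rw [Real.dist_eq] at h2
      have := abs_lt.1 h2
      linarith [this.1]
    set c := max a (x₀ - δ/2) with hc
    set d := min b (x₀ + δ/2) with hd
    have hac : a ≤ c := le_max_left _ _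
    have hdb : d ≤ b := min_le_left _ _
    have hcx : x₀ - δ/2 ≤ c := le_max_right _ _
    have hdx : d ≤ x₀ + δ/2 := min_le_right _ _
    have hcd : c < d := max_lt (lt_min hab (by linarith)) (lt_min (by linarith) (by linarith))
    filter_upwards [eventually_ge_atTop 1, eventually_ge_atTop ⌈1/(d-c)⌉₊] with n hn1 hn2
    have hn0 : (0:ℝ) < n := by exact_mod_cast hn1
    have hnd : 1 ≤ (n:ℝ) * (d - c) := by
      have h1 : (1/(d-c)) ≤ (n:ℝ) := le_trans (Nat.le_ceil _) (by exact_mod_cast hn2)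
      rw [div_le_iff₀ (by linarith)] at h1
      nlinarith
    set i := ⌈(n:ℝ)*c⌉₊ with hi
    have hcnn : 0 ≤ c := le_trans ha hac
    have hic : (n:ℝ)*c ≤ i := Nat.le_ceil _
    have hid : (i:ℝ) ≤ (n:ℝ)*d := by
      have h1 := Nat.ceil_lt_add_one (mul_nonneg hn0.le hcnn)
      nlinarith
    have hmem : i ∈ Finset.Icc ⌈(n:ℝ)*a⌉₊ ⌊(n:ℝ)*b⌋₊ := by
      rw [Finset.mem_Icc]
      refine ⟨Nat.ceil_le_ceil (by nlinarith), Nat.le_floor (le_trans hid (by nlinarith))⟩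
    have hx1 : c ≤ (i:ℝ)/n := (le_div_iff₀ hn0).2 (by nlinarith)
    have hx2 : (i:ℝ)/n ≤ d := (div_le_iff₀ hn0).2 (by nlinarith)
    have hxab : (i:ℝ)/n ∈ Set.Icc a b := ⟨le_trans hac hx1, le_trans hx2 hdb⟩
    have hfx : M - ε < f ((i:ℝ)/n) := by
      apply hδf _ hxab
      rw [abs_lt]
      constructor <;> linarith
    have hSn : Real.exp ((n:ℝ)/π * f ((i:ℝ)/n)) ≤ S n :=
      Finset.single_le_sum (f := fun j : ℕ => Real.exp ((n:ℝ)/π * f ((j:ℝ)/n))) (fun j _ => (Real.exp_pos _).le) hmem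
    have hSpos : 0 < S n := lt_of_lt_of_le (Real.exp_pos _) hSn
    have hlog : (n:ℝ)/π * f ((i:ℝ)/n) ≤ Real.log (S n) :=
      (Real.le_log_iff_exp_le hSpos).2 hSn
    have hkey : π/(n:ℝ) * ((n:ℝ)/π * f ((i:ℝ)/n)) = f ((i:ℝ)/n) := by
      field_simp
    calc M - ε ≤ π/(n:ℝ) * ((n:ℝ)/π * f ((i:ℝ)/n)) := by rw [hkey]; linarith
      _ ≤ π / n * Real.log (S n) := mul_le_mul_of_nonneg_left hlog (by positivity)
  -- Upper bound
  have hup : ∀ᶠ n : ℕ in atTop,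
      π / n * Real.log (S n) ≤ M + π / n * Real.log ((n:ℝ)*(b+1)) := by
    filter_upwards [eventually_ge_atTop 1, eventually_ge_atTop ⌈1/(b-a)⌉₊] with n hn1 hn2
    have hn0 : (0:ℝ) < n := by exact_mod_cast hn1
    have hn1' : (1:ℝ) ≤ n := by exact_mod_cast hn1
    have hnba : 1 ≤ (n:ℝ) * (b - a) := by
      have h1 : (1/(b-a)) ≤ (n:ℝ) := le_trans (Nat.le_ceil _) (by exact_mod_cast hn2)
      rw [div_le_iff₀ (by linarith)] at h1
      nlinarith
    have hne : ⌈(n:ℝ)*a⌉₊ ≤ ⌊(n:ℝ)*b⌋₊ := by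
      apply Nat.le_floor
      have h1 := Nat.ceil_lt_add_one (mul_nonneg hn0.le ha)
      nlinarith
    set K := Finset.Icc ⌈(n:ℝ)*a⌉₊ ⌊(n:ℝ)*b⌋₊ with hK
    have hKne : K.Nonempty := Finset.nonempty_Icc.2 hne
    have hcard1 : (1:ℝ) ≤ K.card := by exact_mod_cast Finset.card_pos.2 hKne
    have hcard : (K.card : ℝ) ≤ (n:ℝ)*(b+1) := by
      have hfl : (⌊(n:ℝ)*b⌋₊ : ℝ) ≤ (n:ℝ)*b := Nat.floor_le (mul_nonneg hn0.le (by linarith))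
      have h2 : K.card ≤ ⌊(n:ℝ)*b⌋₊ + 1 := by
        rw [hK, Nat.card_Icc]; omega
      have h3 : (K.card : ℝ) ≤ (⌊(n:ℝ)*b⌋₊ : ℝ) + 1 := by exact_mod_cast h2
      nlinarith
    have hterm : ∀ j ∈ K, Real.exp ((n:ℝ)/π * f ((j:ℝ)/n)) ≤ Real.exp ((n:ℝ)/π * M) := by
      intro j hj
      rw [hK, Finset.mem_Icc] at hj
      have hja : a ≤ (j:ℝ)/n := by
        rw [le_div_iff₀ hn0]
        have h1 := Nat.le_ceil ((n:ℝ)*a)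
        have h2 : (⌈(n:ℝ)*a⌉₊:ℝ) ≤ j := by exact_mod_cast hj.1
        nlinarith
      have hjb : (j:ℝ)/n ≤ b := by
        rw [div_le_iff₀ hn0]
        have h1 : (j:ℝ) ≤ (⌊(n:ℝ)*b⌋₊:ℝ) := by exact_mod_cast hj.2
        have h2 : (⌊(n:ℝ)*b⌋₊:ℝ) ≤ (n:ℝ)*b := Nat.floor_le (mul_nonneg hn0.le (by linarith))
        nlinarith
      exact Real.exp_le_exp.2 (mul_le_mul_of_nonneg_left (hmax _ ⟨hja, hjb⟩) (by positivity))
    have hSle : S n ≤ (K.card:ℝ) * Real.exp ((n:ℝ)/π * M) := by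
      calc S n ≤ ∑ _j ∈ K, Real.exp ((n:ℝ)/π * M) := Finset.sum_le_sum hterm
        _ = (K.card:ℝ) * Real.exp ((n:ℝ)/π * M) := by rw [Finset.sum_const, nsmul_eq_mul]
    have hSpos : 0 < S n := Finset.sum_pos (fun j _ => Real.exp_pos _) hKne
    have hlog : Real.log (S n) ≤ Real.log ((n:ℝ)*(b+1)) + (n:ℝ)/π * M := by
      calc Real.log (S n) ≤ Real.log ((K.card:ℝ) * Real.exp ((n:ℝ)/π*M)) :=
            Real.log_le_log hSpos hSle
        _ = Real.log (K.card) + (n:ℝ)/π*M := by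
            rw [Real.log_mul (by positivity) (Real.exp_ne_zero _), Real.log_exp]
        _ ≤ Real.log ((n:ℝ)*(b+1)) + (n:ℝ)/π*M := by
            have := Real.log_le_log (by linarith : (0:ℝ) < K.card) hcard
            linarith
    have hkey : π/(n:ℝ) * ((n:ℝ)/π * M) = M := by field_simp
    calc π / n * Real.log (S n)
        ≤ π/(n:ℝ) * (Real.log ((n:ℝ)*(b+1)) + (n:ℝ)/π * M) :=
          mul_le_mul_of_nonneg_left hlog (by positivity)
      _ = M + π / n * Real.log ((n:ℝ)*(b+1)) := by rw [mul_add, hkey]; ring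
  -- The error term tends to 0
  have hg : Tendsto (fun n : ℕ => π / n * Real.log ((n:ℝ)*(b+1))) atTop (nhds 0) := by
    have hb1 : (0:ℝ) < b + 1 := by linarith
    have h1 : Tendsto (fun x : ℝ => Real.log x / ((b+1)⁻¹ * x + 0)) atTop (nhds 0) := by
      have := Real.tendsto_pow_log_div_mul_add_atTop ((b+1)⁻¹) 0 1 (by positivity)
      simpa using this
    have h2 : Tendsto (fun n : ℕ => Real.log ((n:ℝ)*(b+1)) / ((b+1)⁻¹ * ((n:ℝ)*(b+1)) + 0))
        atTop (nhds 0) :=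
      h1.comp (Tendsto.atTop_mul_const hb1 tendsto_natCast_atTop_atTop)
    have h3 : Tendsto (fun n : ℕ => Real.log ((n:ℝ)*(b+1)) / n) atTop (nhds 0) := by
      refine h2.congr' ?_
      filter_upwards [eventually_ge_atTop 1] with n hn
      have hn0 : (0:ℝ) < n := by exact_mod_cast hn
      congr 1
      field_simp
      simp
    have := h3.const_mul π
    simpa [div_mul_eq_mul_div, mul_div_assoc] using this
  -- Conclusion via order topology
  rw [tendsto_order]
  constructor
  · intro u hu
    have hε : 0 < (M - u)/2 := by linarith
    filter_upwards [hlow _ hε] with n hn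
    linarith
  · intro u hu
    have h2 : Tendsto (fun n : ℕ => M + π/n * Real.log ((n:ℝ)*(b+1))) atTop (nhds M) := by
      simpa using tendsto_const_nhds.add hg
    filter_upwards [hup, h2.eventually_lt_const hu] with n h1 h2'
    linarith
end

section
/- Let α ∈ [0,1] and let (bₙ) be a sequence of natural numbers with bₙ < n for every n ≥ 2 and lim_{n→∞} bₙ/n = α. Then lim_{n→∞} −(π/n)·Σ_{j=1}^{bₙ} log(2·sin(πj/n)) = Λ(πα). -/
open Real Filter Finset

/-- The Lobachevsky function `Λ(x) = -∫₀ˣ log|2 sin t| dt`. -/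
noncomputable def lob (x : ℝ) : ℝ := -∫ t in (0:ℝ)..x, Real.log |2 * Real.sin t|

open Set intervalIntegral MeasureTheory

noncomputable def ls (t : ℝ) : ℝ := Real.log (2 * Real.sin t)

lemma ls_hasDerivAt {x : ℝ} (hx : Real.sin x ≠ 0) :
    HasDerivAt ls (Real.cos x / Real.sin x) x := by
  have h := ((Real.hasDerivAt_sin x).const_mul (2:ℝ)).log (by simpa using hx)
  convert h using 1
  · rfl
  · rw [mul_div_mul_left _ _ (two_ne_zero' ℝ)]

lemma ls_concave : StrictConcaveOn ℝ (Set.Ioo 0 π) ls := by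
  have hopen : IsOpen {t : ℝ | Real.sin t ≠ 0} :=
    isOpen_compl_singleton.preimage Real.continuous_sin
  apply strictConcaveOn_of_deriv2_neg (convex_Ioo 0 π)
  · intro x hx
    exact ((ls_hasDerivAt (ne_of_gt (Real.sin_pos_of_pos_of_lt_pi hx.1 hx.2))).continuousAt).continuousWithinAt
  · intro x hx
    rw [interior_Ioo] at hx
    have hsx : Real.sin x ≠ 0 := ne_of_gt (Real.sin_pos_of_pos_of_lt_pi hx.1 hx.2)
    have h1 : deriv ls =ᶠ[nhds x] fun t => Real.cos t / Real.sin t := by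
      filter_upwards [hopen.mem_nhds hsx] with t ht
      exact (ls_hasDerivAt ht).deriv
    simp only [Function.iterate_succ, Function.iterate_zero, Function.comp, id]
    rw [h1.deriv_eq]
    rw [show deriv (fun t => Real.cos t / Real.sin t) x = _ from
      ((Real.hasDerivAt_cos x).div (Real.hasDerivAt_sin x) hsx).deriv]
    apply div_neg_of_neg_of_pos
    · nlinarith [Real.sin_sq_add_cos_sq x]
    · positivity

lemma ls_continuousAt {x : ℝ} (hx : Real.sin x ≠ 0) : ContinuousAt ls x := by
  have h2 : (2 : ℝ) * Real.sin x ≠ 0 := by simpa using hx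
  have : ContinuousAt (fun t => (2:ℝ) * Real.sin t) x :=
    (continuous_const.mul Real.continuous_sin).continuousAt
  exact ContinuousAt.comp (Real.continuousAt_log h2) this

lemma ls_intble {a b : ℝ} (ha : 0 < a) (hb : b < π) (hab : a ≤ b) :
    IntervalIntegrable ls volume a b := by
  apply ContinuousOn.intervalIntegrable
  intro t ht
  rw [Set.uIcc_of_le hab] at ht
  exact (ls_continuousAt (ne_of_gt (Real.sin_pos_of_pos_of_lt_pi (lt_of_lt_of_le ha ht.1)
    (lt_of_le_of_lt ht.2 hb)))).continuousWithinAt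

/-- midpoint rule overestimates for concave ls -/
lemma ls_midpoint {a b : ℝ} (ha : 0 < a) (hb : b < π) (hab : a ≤ b) :
    ∫ x in a..b, ls x ≤ (b - a) * ls ((a + b) / 2) := by
  have hint : IntervalIntegrable ls volume a b := ls_intble ha hb hab
  have hint2 : IntervalIntegrable (fun x => ls (a + b - x)) volume a b := by
    have := ((ls_intble ha hb hab).comp_sub_left (a + b)).symm
    simpa using this
  have key : ∀ x ∈ Set.Icc a b, ls x + ls (a + b - x) ≤ 2 * ls ((a + b) / 2) := by
    intro x hx
    have hx1 : x ∈ Set.Ioo (0:ℝ) π := ⟨lt_of_lt_of_le ha hx.1, lt_of_le_of_lt hx.2 hb⟩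
    have hx2 : a + b - x ∈ Set.Ioo (0:ℝ) π := by
      constructor <;> [linarith [hx.2]; linarith [hx.1]]
    have h := ls_concave.concaveOn.2 hx1 hx2 (by norm_num : (0:ℝ) ≤ 1/2)
      (by norm_num : (0:ℝ) ≤ 1/2) (by norm_num)
    have he : (1/2 : ℝ) • x + (1/2 : ℝ) • (a + b - x) = (a + b) / 2 := by
      simp only [smul_eq_mul]; ring
    rw [he] at h
    simp only [smul_eq_mul] at h
    linarith
  have h1 : (∫ x in a..b, ls x) + (∫ x in a..b, ls (a + b - x)) ≤
      ∫ x in a..b, 2 * ls ((a + b) / 2) := by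
    rw [← intervalIntegral.integral_add hint hint2]
    exact intervalIntegral.integral_mono_on hab (hint.add hint2)
      (intervalIntegrable_const) key
  have h2 : (∫ x in a..b, ls (a + b - x)) = ∫ x in a..b, ls x := by
    rw [intervalIntegral.integral_comp_sub_left ls (a+b)]
    norm_num
  rw [h2, intervalIntegral.integral_const] at h1
  simp only [smul_eq_mul] at h1
  linarith

/-- trapezoid rule underestimates for concave ls -/
lemma ls_trapezoid {a b : ℝ} (ha : 0 < a) (hb : b < π) (hab : a ≤ b) :
    (b - a) * ((ls a + ls b) / 2) ≤ ∫ x in a..b, ls x := by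
  rcases eq_or_lt_of_le hab with rfl | hab'
  · simp
  have hba : (0:ℝ) < b - a := by linarith
  have hint : IntervalIntegrable ls volume a b := ls_intble ha hb hab
  have key : ∀ x ∈ Set.Icc a b, (ls b - ls a) / (b - a) * x
      + (b * ls a - a * ls b) / (b - a) ≤ ls x := by
    intro x hx
    have hs : 0 ≤ (b - x)/(b - a) := by
      apply div_nonneg <;> linarith [hx.2]
    have ht : 0 ≤ (x - a)/(b - a) := by
      apply div_nonneg <;> linarith [hx.1]
    have hst : (b - x)/(b - a) + (x - a)/(b - a) = 1 := by field_simp; ring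
    have h := ls_concave.concaveOn.2 (⟨ha, lt_of_le_of_lt hab hb⟩ : a ∈ Set.Ioo (0:ℝ) π)
      (⟨lt_of_lt_of_le ha hab, hb⟩ : b ∈ Set.Ioo (0:ℝ) π) hs ht hst
    have he : ((b - x)/(b - a)) • a + ((x - a)/(b - a)) • b = x := by
      simp only [smul_eq_mul]; field_simp; ring
    rw [he] at h
    simp only [smul_eq_mul] at h
    have : (b - x)/(b-a) * ls a + (x-a)/(b-a) * ls b
        = (ls b - ls a) / (b - a) * x + (b * ls a - a * ls b) / (b - a) := by
      field_simp; ring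
    linarith [this ▸ h]
  have hlin : IntervalIntegrable (fun x => (ls b - ls a) / (b - a) * x
      + (b * ls a - a * ls b) / (b - a)) volume a b := by
    apply Continuous.intervalIntegrable; continuity
  have h1 := intervalIntegral.integral_mono_on hab hlin hint key
  have h2 : (∫ x in a..b, ((ls b - ls a) / (b - a) * x + (b * ls a - a * ls b) / (b - a)))
      = (b - a) * ((ls a + ls b) / 2) := by
    rw [intervalIntegral.integral_add (by apply Continuous.intervalIntegrable; continuity)
      intervalIntegrable_const]
    rw [intervalIntegral.integral_const_mul, integral_id, intervalIntegral.integral_const]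
    simp only [smul_eq_mul]
    field_simp
    ring
  linarith [h2 ▸ h1]

lemma sum_lower (n m : ℕ) (hn : 2 ≤ n) (hm : m < n) :
    (∫ t in ((1/2) * π / n)..(((m:ℝ) + 1/2) * π / n), ls t)
      ≤ (π/n) * ∑ j ∈ Finset.Icc 1 m, ls (π * j / n) := by
  have hn0 : (0:ℝ) < n := by positivity
  have hmn : (m:ℝ) ≤ (n:ℝ) - 1 := by
    have : (m:ℝ) + 1 ≤ n := by exact_mod_cast hm
    linarith
  set ψ : ℕ → ℝ := fun k => ((k:ℝ) + 1/2) * π / n with hψ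
  have hψ0 : ∀ k : ℕ, 0 < ψ k := fun k => by
    apply div_pos _ hn0; positivity
  have hψπ : ∀ k : ℕ, (k:ℝ) ≤ (n:ℝ) - 1 → ψ k < π := by
    intro k hk
    rw [div_lt_iff₀ hn0]
    nlinarith [pi_pos]
  have hψmono : ∀ k l : ℕ, k ≤ l → ψ k ≤ ψ l := by
    intro k l hkl
    have h : (k:ℝ) ≤ l := by exact_mod_cast hkl
    apply div_le_div_of_nonneg_right ?_ hn0.le
    · nlinarith [pi_pos]
  have hintk : ∀ k : ℕ, k < m → IntervalIntegrable ls volume (ψ k) (ψ (k+1)) := by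
    intro k hk
    refine ls_intble (hψ0 k) (hψπ (k+1) ?_) (hψmono k (k+1) (by omega))
    have : (k:ℝ) + 1 ≤ m := by exact_mod_cast hk
    push_cast; linarith
  have hsplit := intervalIntegral.sum_integral_adjacent_intervals hintk
  have hψ0' : ψ 0 = (1/2) * π / n := by simp [hψ]
  have hψm : ψ m = ((m:ℝ) + 1/2) * π / n := rfl
  rw [← hψ0', ← hψm, ← hsplit]
  have hterm : ∀ k ∈ Finset.range m, (∫ t in (ψ k)..(ψ (k+1)), ls t)
      ≤ (π/n) * ls (π * ((k:ℝ)+1) / n) := by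
    intro k hk
    rw [Finset.mem_range] at hk
    have hkn : ((k:ℝ)+1) ≤ (n:ℝ) - 1 := by
      have : (k:ℝ) + 1 ≤ m := by exact_mod_cast hk
      push_cast; linarith
    have h := ls_midpoint (hψ0 k) (hψπ (k+1) (by push_cast at hkn ⊢; linarith))
      (hψmono k (k+1) (by omega))
    have e1 : ψ (k+1) - ψ k = π / n := by
      simp only [hψ]; push_cast; field_simp; ring
    have e2 : (ψ k + ψ (k+1)) / 2 = π * ((k:ℝ)+1) / n := by
      simp only [hψ]; push_cast; field_simp; ring
    rw [e1, e2] at h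
    exact h
  calc ∑ k ∈ Finset.range m, ∫ t in (ψ k)..(ψ (k+1)), ls t
      ≤ ∑ k ∈ Finset.range m, (π/n) * ls (π * ((k:ℝ)+1) / n) :=
        Finset.sum_le_sum hterm
    _ = (π/n) * ∑ j ∈ Finset.Icc 1 m, ls (π * j / n) := by
        rw [← Finset.mul_sum]
        congr 1
        rw [← Finset.Ico_add_one_right_eq_Icc, Finset.sum_Ico_eq_sum_range]
        norm_num
        apply Finset.sum_congr rfl
        intro k _
        congr 2
        push_cast
        ring

lemma sum_upper (n m : ℕ) (hn : 2 ≤ n) (hm1 : 1 ≤ m) (hm : m < n) :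
    (π/n) * ∑ j ∈ Finset.Icc 1 m, ls (π * j / n)
      ≤ (∫ t in (π/n)..((m:ℝ) * π / n), ls t)
        + (π/(2*n)) * (ls (π / n) + ls ((m:ℝ) * π / n)) := by
  obtain ⟨p, rfl⟩ : ∃ p, m = p + 1 := ⟨m - 1, by omega⟩
  have hn0 : (0:ℝ) < n := by positivity
  have hmn : ((p:ℝ) + 1) ≤ (n:ℝ) - 1 := by
    have : ((p:ℝ) + 1) + 1 ≤ n := by exact_mod_cast hm
    linarith
  set φ : ℕ → ℝ := fun k => ((k:ℝ) + 1) * π / n with hφ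
  have hφ0 : ∀ k : ℕ, 0 < φ k := fun k => by
    apply div_pos _ hn0; positivity
  have hφπ : ∀ k : ℕ, (k:ℝ) + 1 ≤ (n:ℝ) - 1 → φ k < π := by
    intro k hk
    rw [div_lt_iff₀ hn0]
    nlinarith [pi_pos]
  have hφmono : ∀ k l : ℕ, k ≤ l → φ k ≤ φ l := by
    intro k l hkl
    have h : (k:ℝ) ≤ l := by exact_mod_cast hkl
    apply div_le_div_of_nonneg_right ?_ hn0.le
    · nlinarith [pi_pos]
  have hintk : ∀ k : ℕ, k < p → IntervalIntegrable ls volume (φ k) (φ (k+1)) := by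
    intro k hk
    refine ls_intble (hφ0 k) (hφπ (k+1) ?_) (hφmono k (k+1) (by omega))
    have : (k:ℝ) + 1 ≤ p := by exact_mod_cast hk
    push_cast; linarith
  have hsplit := intervalIntegral.sum_integral_adjacent_intervals hintk
  -- termwise trapezoid
  have hterm : ∀ k ∈ Finset.range p,
      (π/(2*n)) * (ls (φ k) + ls (φ (k+1))) ≤ ∫ t in (φ k)..(φ (k+1)), ls t := by
    intro k hk
    rw [Finset.mem_range] at hk
    have hkn : (k:ℝ) + 1 ≤ p := by exact_mod_cast hk
    have h := ls_trapezoid (hφ0 k) (hφπ (k+1) (by push_cast; linarith))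
      (hφmono k (k+1) (by omega))
    have e1 : φ (k+1) - φ k = π / n := by
      simp only [hφ]; push_cast; field_simp; ring
    rw [e1] at h
    have e2 : ∀ X : ℝ, (π/(2*(n:ℝ))) * X = π/(n:ℝ) * (X/2) := by
      intro X
      rw [div_mul_eq_mul_div, div_mul_eq_mul_div,
        div_eq_div_iff (by positivity : (2*(n:ℝ)) ≠ 0) (by positivity : ((n:ℝ)) ≠ 0)]
      ring
    rw [e2]
    exact h
  have hsum : ∑ k ∈ Finset.range p, (π/(2*n)) * (ls (φ k) + ls (φ (k+1)))
      ≤ ∑ k ∈ Finset.range p, ∫ t in (φ k)..(φ (k+1)), ls t :=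
    Finset.sum_le_sum hterm
  rw [hsplit] at hsum
  -- identify endpoints
  have hφ0' : φ 0 = π / n := by simp [hφ]
  have hφp : φ p = ((p:ℝ)+1) * π / n := rfl
  -- sum rearrangement
  set g : ℕ → ℝ := fun j => ls (π * j / n) with hg
  have hgφ : ∀ k : ℕ, ls (φ k) = g (k+1) := by
    intro k; simp only [hφ, hg]; push_cast; ring_nf
  have hS1 : ∑ k ∈ Finset.range p, ls (φ k)
      = (∑ j ∈ Finset.Icc 1 (p+1), g j) - g (p+1) := by
    have : ∑ j ∈ Finset.Icc 1 (p+1), g j = ∑ k ∈ Finset.range (p+1), g (k+1) := by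
      rw [← Finset.Ico_add_one_right_eq_Icc, Finset.sum_Ico_eq_sum_range]
      norm_num
      apply Finset.sum_congr rfl
      intro k _; congr 1; omega
    rw [this, Finset.sum_range_succ]
    simp only [hgφ]
    ring
  have hS2 : ∑ k ∈ Finset.range p, ls (φ (k+1))
      = (∑ j ∈ Finset.Icc 1 (p+1), g j) - g 1 := by
    have h1 : ∑ j ∈ Finset.Icc 1 (p+1), g j = ∑ k ∈ Finset.range (p+1), g (k+1) := by
      rw [← Finset.Ico_add_one_right_eq_Icc, Finset.sum_Ico_eq_sum_range]
      norm_num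
      apply Finset.sum_congr rfl
      intro k _; congr 1; omega
    have h2 : ∑ k ∈ Finset.range (p+1), g (k+1)
        = (∑ k ∈ Finset.range p, g (k+1+1)) + g 1 := Finset.sum_range_succ' _ _
    rw [h1, h2]
    have e : ∀ (k:ℕ), ls (φ (k+1)) = g (k+1+1) := fun k => hgφ (k+1)
    simp only [e]
    ring
  have hg1 : g 1 = ls (π / n) := by simp only [hg]; norm_num
  have hgp1 : g (p+1) = ls (((p:ℝ)+1) * π / n) := by
    simp only [hg]; push_cast; ring_nf
  have expand : ∑ k ∈ Finset.range p, (π/(2*n)) * (ls (φ k) + ls (φ (k+1)))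
      = (π/n) * (∑ j ∈ Finset.Icc 1 (p+1), g j)
        - (π/(2*n)) * (ls (π/n) + ls (((p:ℝ)+1) * π / n)) := by
    rw [← Finset.mul_sum, Finset.sum_add_distrib, hS1, hS2, hg1, hgp1]
    have hne : (n:ℝ) ≠ 0 := ne_of_gt hn0
    field_simp
    ring
  rw [expand] at hsum
  have hcast : ((p+1 : ℕ):ℝ) = (p:ℝ) + 1 := by push_cast; ring
  rw [hφ0', hφp] at hsum
  rw [hcast]
  simp only [hg] at hsum
  linarith

lemma log_intble01 : IntervalIntegrable Real.log volume 0 1 := by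
  have h01 : (0:ℝ) ≤ 1 := by norm_num
  have h := intervalIntegrable_deriv_of_nonneg (g := fun x => x - x * Real.log x)
    (g' := fun x => -Real.log x) (a := (0:ℝ)) (b := 1)
    ((continuous_id.sub Real.continuous_mul_log).continuousOn)
    (fun x hx => by
      rw [min_eq_left h01, max_eq_right h01] at hx
      have hx0 : x ≠ 0 := ne_of_gt hx.1
      have h1 : HasDerivAt (fun x : ℝ => x - x * Real.log x)
          (1 - (1 * Real.log x + x * x⁻¹)) x :=
        (hasDerivAt_id x).sub ((hasDerivAt_id x).mul (Real.hasDerivAt_log hx0))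
      convert h1 using 1
      field_simp; ring)
    (fun x hx => by
      rw [min_eq_left h01, max_eq_right h01] at hx
      simp only [neg_nonneg]
      exact Real.log_nonpos hx.1.le hx.2.le)
  have h2 := h.neg
  have he : (-fun x : ℝ => -Real.log x) = Real.log := by funext x; simp
  rwa [he] at h2

lemma log_intble0pi2 : IntervalIntegrable Real.log volume 0 (π/2) := by
  refine log_intble01.trans ?_
  apply intervalIntegrable_log
  intro h
  rw [Set.mem_uIcc] at h
  have := pi_gt_three
  rcases h with ⟨h1, _⟩ | ⟨_, h2⟩ <;> linarith

lemma ls_meas : AEStronglyMeasurable ls (volume.restrict (Set.Ioc 0 (π/2))) := by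
  have : Measurable ls :=
    Real.measurable_log.comp ((continuous_const.mul Real.continuous_sin).measurable)
  exact this.aestronglyMeasurable

lemma ls_intble_left : IntervalIntegrable ls volume 0 (π/2) := by
  have hpi2 : (0:ℝ) ≤ π/2 := by positivity
  rw [intervalIntegrable_iff_integrableOn_Ioc_of_le hpi2]
  have hlog : IntegrableOn Real.log (Set.Ioc 0 (π/2)) volume := by
    rw [← intervalIntegrable_iff_integrableOn_Ioc_of_le hpi2]
    exact log_intble0pi2
  have hg : IntegrableOn (fun t => |Real.log t| + Real.log 2) (Set.Ioc 0 (π/2)) volume :=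
    hlog.abs.add (integrableOn_const measure_Ioc_lt_top.ne)
  apply hg.integrable.mono ls_meas
  rw [ae_restrict_iff' measurableSet_Ioc]
  apply ae_of_all
  intro t ht
  have ht0 : 0 < t := ht.1
  have ht2 : t ≤ π/2 := ht.2
  have hsin_le : Real.sin t ≤ t := Real.sin_le ht0.le
  have hsin_ge : 2/π * t ≤ Real.sin t := Real.mul_le_sin ht0.le ht2
  have hsin_pos : 0 < Real.sin t := lt_of_lt_of_le (by positivity) hsin_ge
  have hup : ls t ≤ Real.log 2 + Real.log t := by
    rw [← Real.log_mul (by norm_num) (ne_of_gt ht0)]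
    exact Real.log_le_log (by positivity) (by linarith)
  have hdown : Real.log t ≤ ls t := by
    apply Real.log_le_log ht0
    have h4 : (1:ℝ) ≤ 4/π := by
      rw [le_div_iff₀ pi_pos]
      nlinarith [pi_lt_d2]
    have e1 : (4/π) * t = 2 * (2/π * t) := by ring
    have e2 := mul_le_mul_of_nonneg_right h4 ht0.le
    linarith
  have habs : |ls t| ≤ |Real.log t| + Real.log 2 := by
    rw [abs_le]
    constructor
    · have := neg_abs_le (Real.log t)
      have h2 : (0:ℝ) ≤ Real.log 2 := Real.log_nonneg (by norm_num)
      linarith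
    · have := le_abs_self (Real.log t)
      linarith
  simp only [Real.norm_eq_abs]
  exact le_trans habs (le_abs_self _)

lemma ls_intble_0pi : IntervalIntegrable ls volume 0 π := by
  refine ls_intble_left.trans ?_
  have h := (ls_intble_left.comp_sub_left π).symm
  have he : (fun x => ls (π - x)) = ls := by
    funext x
    simp only [ls, Real.sin_pi_sub]
  rw [he, show π - π/2 = π/2 by ring, show π - (0:ℝ) = π by ring] at h
  exact h

lemma sin_lower {a x : ℝ} (ha : 0 < a) (hx1 : a ≤ x) (hx2 : x ≤ π - a) :
    Real.sin a ≤ Real.sin x := by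
  have ha2 : a ≤ π/2 := by linarith
  rcases le_or_gt x (π/2) with h | h
  · exact Real.strictMonoOn_sin.monotoneOn ⟨by linarith, ha2⟩ ⟨by linarith, h⟩ hx1
  · rw [← Real.sin_pi_sub x]
    exact Real.strictMonoOn_sin.monotoneOn ⟨by linarith, ha2⟩ ⟨by linarith, by linarith⟩
      (by linarith)

lemma sin_pin_lb (n : ℕ) (hn : 2 ≤ n) : 4 / (n:ℝ) ≤ 2 * Real.sin (π / n) := by
  have hn0 : (0:ℝ) < n := by positivity
  have hn2 : (2:ℝ) ≤ n := by exact_mod_cast hn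
  have h := Real.mul_le_sin (x := π / n) (by positivity)
    (by
      rw [div_le_div_iff₀ hn0 (by norm_num : (0:ℝ) < 2)]
      nlinarith [pi_pos])
  have e : 2 / π * (π / n) = 2 / n := by
    field_simp
  rw [e] at h
  rw [show (4:ℝ)/n = 2 * (2/n) by ring]
  linarith

lemma ls_bound (n j : ℕ) (hn : 2 ≤ n) (h1 : 1 ≤ j) (h2 : j < n) :
    |ls (π * j / n)| ≤ Real.log n := by
  have hn0 : (0:ℝ) < n := by positivity
  have hn2 : (2:ℝ) ≤ n := by exact_mod_cast hn
  have hj1 : (1:ℝ) ≤ (j:ℝ) := by exact_mod_cast h1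
  have hjn : (j:ℝ) ≤ (n:ℝ) - 1 := by
    have : (j:ℝ) + 1 ≤ n := by exact_mod_cast h2
    linarith
  have hpin : 0 < π / n := by positivity
  have harg1 : π / n ≤ π * j / n := by
    apply div_le_div_of_nonneg_right _ hn0.le
    nlinarith [pi_pos]
  have harg2 : π * j / n ≤ π - π / n := by
    rw [div_le_iff₀ hn0, sub_mul, div_mul_cancel₀ _ (ne_of_gt hn0)]
    nlinarith [pi_pos]
  have hs := sin_lower hpin harg1 harg2
  have hs0 : 0 < Real.sin (π / n) := by
    apply Real.sin_pos_of_pos_of_lt_pi hpin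
    rw [div_lt_iff₀ hn0]
    nlinarith [pi_pos]
  have hsx : 0 < Real.sin (π * j / n) := lt_of_lt_of_le hs0 hs
  have hub : ls (π * j / n) ≤ Real.log n := by
    apply Real.log_le_log (by positivity)
    nlinarith [Real.sin_le_one (π * j / n)]
  have hlb : -Real.log n ≤ ls (π * j / n) := by
    have h1' : Real.log (4 / (n:ℝ)) ≤ ls (π / n) := by
      apply Real.log_le_log (by positivity) (sin_pin_lb n hn)
    have h2' : ls (π / n) ≤ ls (π * j / n) := by
      apply Real.log_le_log (by positivity)
      linarith
    have h3' : Real.log (4 / (n:ℝ)) = Real.log 4 - Real.log n :=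
      Real.log_div (by norm_num) (ne_of_gt hn0)
    have h4' : (0:ℝ) ≤ Real.log 4 := Real.log_nonneg (by norm_num)
    unfold ls at h1' h2' ⊢
    linarith
  rw [abs_le]
  exact ⟨hlb, hub⟩

noncomputable def Fl (x : ℝ) : ℝ := ∫ t in (0:ℝ)..x, ls t

lemma Fl_cont : ContinuousOn Fl (Set.Icc 0 π) := by
  have h := intervalIntegral.continuousOn_primitive_interval' ls_intble_0pi
    (Set.left_mem_uIcc (a := (0:ℝ)) (b := π))
  rwa [Set.uIcc_of_le pi_pos.le] at h

lemma Fl_diff {x y : ℝ} (hx : x ∈ Set.Icc 0 π) (hy : y ∈ Set.Icc 0 π) :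
    Fl x - Fl y = ∫ t in y..x, ls t := by
  have hIx : IntervalIntegrable ls volume 0 x := by
    apply ls_intble_0pi.mono_set
    rw [Set.uIcc_of_le hx.1, Set.uIcc_of_le pi_pos.le]
    exact Set.Icc_subset_Icc le_rfl hx.2
  have hIy : IntervalIntegrable ls volume 0 y := by
    apply ls_intble_0pi.mono_set
    rw [Set.uIcc_of_le hy.1, Set.uIcc_of_le pi_pos.le]
    exact Set.Icc_subset_Icc le_rfl hy.2
  exact intervalIntegral.integral_interval_sub_left hIx hIy

lemma aux_mem {x : ℝ} (n : ℕ) (hn : 2 ≤ n) (hx0 : 0 ≤ x) (hxn : x ≤ (n:ℝ)) :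
    x * π / n ∈ Set.Icc 0 π := by
  have hn0 : (0:ℝ) < n := by
    have : (2:ℝ) ≤ n := by exact_mod_cast hn
    linarith
  constructor
  · positivity
  · rw [div_le_iff₀ hn0]
    nlinarith [pi_pos]

/-- for `α ∈ [0,1]` and naturals `bₙ < n` with `bₙ/n → α`, the sums
`-(π/n) Σ_{j=1}^{bₙ} log(2 sin(πj/n))` converge to `Λ(πα)`. -/
theorem quantum_factorial_asymptotics (α : ℝ) (hα : α ∈ Set.Icc (0:ℝ) 1)
    (b : ℕ → ℕ) (hb : ∀ n, 2 ≤ n → b n < n)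
    (hlim : Tendsto (fun n : ℕ => (b n : ℝ) / n) atTop (nhds α)) :
    Tendsto (fun n : ℕ =>
        -(Real.pi / n) * ∑ j ∈ Finset.Icc 1 (b n),
          Real.log (2 * Real.sin (Real.pi * j / n)))
      atTop (nhds (lob (Real.pi * α))) := by
  have hlob : lob (Real.pi * α) = -Fl (Real.pi * α) := by
    unfold lob Fl
    congr 1
    apply intervalIntegral.integral_congr
    intro t _
    simp only [ls]
    rw [Real.log_abs]
  rw [hlob]
  have hπα : π * α ∈ Set.Icc 0 π := by
    constructor
    · exact mul_nonneg pi_pos.le hα.1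
    · nlinarith [pi_pos, hα.2]
  -- basic sequences
  set c0 : ℕ → ℝ := fun n => (1/2) * π / n with hc0def
  set c1 : ℕ → ℝ := fun n => ((b n : ℝ) + 1/2) * π / n with hc1def
  set c2 : ℕ → ℝ := fun n => π / n with hc2def
  set c3 : ℕ → ℝ := fun n => ((b n ⊔ 1 : ℕ) : ℝ) * π / n with hc3def
  have hinv : Tendsto (fun n : ℕ => ((n:ℝ))⁻¹) atTop (nhds 0) :=
    tendsto_inv_atTop_nhds_zero_nat
  have hb' : Tendsto (fun n : ℕ => ((b n : ℝ)/n) * π) atTop (nhds (α * π)) :=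
    hlim.mul_const π
  have h2 : Tendsto c2 atTop (nhds 0) := by
    have := hinv.const_mul π
    rw [mul_zero] at this
    refine this.congr fun n => ?_
    simp [hc2def, div_eq_mul_inv, mul_comm]
  have h0 : Tendsto c0 atTop (nhds 0) := by
    have := hinv.const_mul ((1/2) * π)
    rw [mul_zero] at this
    refine this.congr fun n => ?_
    simp [hc0def, div_eq_mul_inv, mul_comm]
  have h1 : Tendsto c1 atTop (nhds (π * α)) := by
    have ht := hb'.add (hinv.const_mul ((1/2) * π))
    rw [mul_zero, add_zero] at ht
    rw [show α * π = π * α from mul_comm α π] at ht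
    refine ht.congr fun n => ?_
    simp only [hc1def]
    rcases Nat.eq_zero_or_pos n with rfl | hn
    · simp
    · have hn0 : (n:ℝ) ≠ 0 := by positivity
      field_simp
  have h3 : Tendsto c3 atTop (nhds (π * α)) := by
    have ht := hb'.max h2
    rw [max_eq_left (by nlinarith [pi_pos, hα.1] : (0:ℝ) ≤ α * π)] at ht
    rw [show α * π = π * α from mul_comm α π] at ht
    refine ht.congr fun n => ?_
    simp only [hc3def, hc2def, Nat.cast_max, Nat.cast_one]
    rw [mul_div_assoc, max_mul_of_nonneg _ _ (div_nonneg pi_pos.le (Nat.cast_nonneg n))]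
    congr 1
    · rw [div_mul_eq_mul_div, mul_div_assoc]
    · rw [one_mul]
  -- memberships
  have hmem0 : ∀ n : ℕ, 2 ≤ n → c0 n ∈ Set.Icc 0 π := by
    intro n hn
    have h := aux_mem (x := (1/2 : ℝ)) n hn (by norm_num)
      (by
        have : (2:ℝ) ≤ n := by exact_mod_cast hn
        linarith)
    exact h
  have hmem1 : ∀ n : ℕ, 2 ≤ n → c1 n ∈ Set.Icc 0 π := by
    intro n hn
    refine aux_mem n hn (by positivity) ?_
    have h := hb n hn
    have : (b n : ℝ) + 1 ≤ n := by exact_mod_cast h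
    linarith
  have hmem2 : ∀ n : ℕ, 2 ≤ n → c2 n ∈ Set.Icc 0 π := by
    intro n hn
    have h := aux_mem (x := (1:ℝ)) n hn (by norm_num)
      (by
        have : (2:ℝ) ≤ n := by exact_mod_cast hn
        linarith)
    rw [one_mul] at h
    exact h
  have hmem3 : ∀ n : ℕ, 2 ≤ n → c3 n ∈ Set.Icc 0 π := by
    intro n hn
    refine aux_mem n hn (by positivity) ?_
    have h : (b n ⊔ 1 : ℕ) ≤ n := by
      have := hb n hn
      omega
    exact_mod_cast h
  -- F compositions
  have hFcomp : ∀ (c : ℕ → ℝ) (l : ℝ), l ∈ Set.Icc 0 π →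
      Tendsto c atTop (nhds l) → (∀ n : ℕ, 2 ≤ n → c n ∈ Set.Icc 0 π) →
      Tendsto (fun n => Fl (c n)) atTop (nhds (Fl l)) := by
    intro c l hl hc hcm
    have hwithin : Tendsto c atTop (nhdsWithin l (Set.Icc 0 π)) := by
      rw [tendsto_nhdsWithin_iff]
      exact ⟨hc, (eventually_ge_atTop 2).mono hcm⟩
    exact ((Fl_cont l hl).tendsto.comp hwithin : _)
  have hF0 : Fl 0 = 0 := intervalIntegral.integral_same
  have hmem00 : (0:ℝ) ∈ Set.Icc 0 π := ⟨le_rfl, pi_pos.le⟩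
  have hL : Tendsto (fun n => Fl (c1 n) - Fl (c0 n)) atTop (nhds (Fl (π * α))) := by
    have := (hFcomp c1 (π*α) hπα h1 hmem1).sub (hFcomp c0 0 hmem00 h0 hmem0)
    rwa [hF0, sub_zero] at this
  -- error term
  have hlog : Tendsto (fun n : ℕ => 2 * π * (Real.log n / n)) atTop (nhds 0) := by
    have hl : Tendsto (fun x : ℝ => Real.log x / x) atTop (nhds 0) := by
      have := Real.isLittleO_log_id_atTop.tendsto_div_nhds_zero
      simpa using this
    have := (hl.comp tendsto_natCast_atTop_atTop).const_mul (2 * π)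
    rw [mul_zero] at this
    exact this.congr fun n => rfl
  have hE : Tendsto (fun n : ℕ =>
      (π/(2*(n:ℝ))) * (ls (c2 n) + ls (c3 n)) + (π/n) * |ls (c2 n)|) atTop (nhds 0) := by
    apply squeeze_zero_norm' _ hlog
    filter_upwards [eventually_ge_atTop 2] with n hn
    have hn0 : (0:ℝ) < n := by
      have : (2:ℝ) ≤ n := by exact_mod_cast hn
      linarith
    have e2 : |ls (c2 n)| ≤ Real.log n := by
      have h := ls_bound n 1 hn le_rfl (by omega)
      simp only [Nat.cast_one, mul_one] at h
      simp only [hc2def]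
      exact h
    have e3 : |ls (c3 n)| ≤ Real.log n := by
      have h := ls_bound n (b n ⊔ 1) hn (le_max_right _ _)
        (by have := hb n hn; omega)
      simp only [hc3def]
      rw [mul_comm π (((b n ⊔ 1 : ℕ)):ℝ)] at h
      exact h
    have hlogn : 0 ≤ Real.log n := Real.log_nonneg (by
      have : (2:ℝ) ≤ n := by exact_mod_cast hn
      linarith)
    have hc2' : 0 ≤ π/(2*(n:ℝ)) := by positivity
    have hcn' : 0 ≤ π/(n:ℝ) := by positivity
    have t1 := norm_add_le ((π/(2*(n:ℝ))) * (ls (c2 n) + ls (c3 n))) ((π/n) * |ls (c2 n)|)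
    have t2 : ‖(π/(2*(n:ℝ))) * (ls (c2 n) + ls (c3 n))‖
        = (π/(2*(n:ℝ))) * |ls (c2 n) + ls (c3 n)| := by
      rw [Real.norm_eq_abs, abs_mul, abs_of_nonneg hc2']
    have t3 : ‖(π/(n:ℝ)) * |ls (c2 n)|‖ = (π/(n:ℝ)) * |ls (c2 n)| := by
      rw [Real.norm_eq_abs, abs_mul, abs_of_nonneg hcn', abs_abs]
    have t4 : |ls (c2 n) + ls (c3 n)| ≤ 2 * Real.log n :=
      (abs_add_le _ _).trans (by linarith)
    have t5 := mul_le_mul_of_nonneg_left t4 hc2'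
    have t6 := mul_le_mul_of_nonneg_left e2 hcn'
    have teq : (π/(2*(n:ℝ))) * (2 * Real.log n) + (π/(n:ℝ)) * Real.log n
        = 2 * π * (Real.log n / n) := by
      field_simp
      ring
    rw [t2, t3] at t1
    linarith
  have hU : Tendsto (fun n => (Fl (c3 n) - Fl (c2 n))
      + ((π/(2*(n:ℝ))) * (ls (c2 n) + ls (c3 n)) + (π/n) * |ls (c2 n)|))
      atTop (nhds (Fl (π * α))) := by
    have hd := (hFcomp c3 (π*α) hπα h3 hmem3).sub (hFcomp c2 0 hmem00 h2 hmem2)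
    rw [hF0, sub_zero] at hd
    have := hd.add hE
    rwa [add_zero] at this
  -- squeeze
  have hmain : Tendsto (fun n : ℕ => (π/(n:ℝ)) * ∑ j ∈ Finset.Icc 1 (b n), ls (π * j / n))
      atTop (nhds (Fl (π * α))) := by
    apply tendsto_of_tendsto_of_tendsto_of_le_of_le' hL hU
    · filter_upwards [eventually_ge_atTop 2] with n hn
      have hd := Fl_diff (hmem1 n hn) (hmem0 n hn)
      rw [hd]
      have hs := sum_lower n (b n) hn (hb n hn)
      simp only [hc0def, hc1def]
      exact hs
    · filter_upwards [eventually_ge_atTop 2] with n hn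
      rcases Nat.eq_zero_or_pos (b n) with hbn | hbn
      · have hT : (π/(n:ℝ)) * ∑ j ∈ Finset.Icc 1 (b n), ls (π * j / n) = 0 := by
          rw [hbn]
          simp
        rw [hT]
        have hc32 : c3 n = c2 n := by
          simp only [hc3def, hc2def, hbn]
          norm_num
        rw [hc32, sub_self, zero_add]
        have habs : -|ls (c2 n)| ≤ ls (c2 n) := neg_abs_le _
        have h1' : 0 ≤ π/(2*(n:ℝ)) := by positivity
        have h2' : 0 ≤ π/(n:ℝ) := by positivity
        have hn0 : (0:ℝ) < n := by
          have : (2:ℝ) ≤ n := by exact_mod_cast hn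
          linarith
        have key : (π/(2*(n:ℝ))) * (ls (c2 n) + ls (c2 n)) = (π/(n:ℝ)) * ls (c2 n) := by
          field_simp
          ring
        rw [key]
        nlinarith [abs_nonneg (ls (c2 n)), mul_le_mul_of_nonneg_left habs h2']
      · have hsup : (b n ⊔ 1 : ℕ) = b n := sup_eq_left.mpr hbn
        have hd := Fl_diff (hmem3 n hn) (hmem2 n hn)
        rw [hd]
        have hs := sum_upper n (b n) hn hbn (hb n hn)
        have hc3e : c3 n = (b n : ℝ) * π / n := by
          simp only [hc3def, hsup]
        have hc2e : c2 n = π / (n:ℝ) := by simp only [hc2def]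
        rw [hc3e, hc2e]
        have hpos : 0 ≤ (π/(n:ℝ)) * |ls (π / (n:ℝ))| := by positivity
        linarith
  -- conclude
  have hfinal := hmain.neg
  refine hfinal.congr fun n => ?_
  simp only [ls, neg_mul]
end

section
/- Let α ∈ [0,1] and let (bₙ) be a sequence of natural numbers with bₙ < n for every n ≥ 2 and lim_{n→∞} bₙ/n = α. Then lim_{n→∞} −(π/n)·( Σ_{j=1}^{n−1} log(2·sin(πj/n)) + Σ_{j=1}^{bₙ} log(2·sin(πj/n)) ) = Λ(πα). -/
open Real Filter Finset MeasureTheory Set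

lemma aux_integrable_abs_log : IntegrableOn (fun t : ℝ => |Real.log t|) (Set.Ioc 0 1) volume := by
  have h1 : IntegrableOn (fun t : ℝ => -Real.log t) (Set.Ioc 0 1) volume := by
    apply intervalIntegral.integrableOn_deriv_of_nonneg (g := fun t => t - t * Real.log t)
    · exact (continuous_id.sub Real.continuous_mul_log).continuousOn
    · intro x hx
      have h2 : HasDerivAt (fun t : ℝ => t * Real.log t) (Real.log x + 1) x := by
        have := (hasDerivAt_id x).mul (Real.hasDerivAt_log (ne_of_gt hx.1))
        exact this.congr_deriv (by field_simp [ne_of_gt hx.1]; show Real.log x * x + x = x * (Real.log x + 1); ring)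
      exact ((hasDerivAt_id x).sub h2).congr_deriv (by ring)
    · intro x hx
      simpa using Real.log_nonpos hx.1.le hx.2.le
  apply h1.congr_fun _ measurableSet_Ioc
  intro t ht
  exact (abs_of_nonpos (Real.log_nonpos ht.1.le ht.2)).symm

lemma aux_integrable_logsin : IntegrableOn (fun t : ℝ => Real.log (2 * Real.sin t)) (Set.Ioc 0 (π/2)) volume := by
  have hpi : (1:ℝ) ≤ π / 2 := by nlinarith [Real.pi_gt_three]
  have habs : IntegrableOn (fun t : ℝ => |Real.log t| + Real.log 2) (Set.Ioc 0 (π/2)) volume := by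
    have hconst : IntegrableOn (fun _ : ℝ => Real.log 2) (Set.Ioc 0 (π/2)) volume :=
      MeasureTheory.integrableOn_const measure_Ioc_lt_top.ne
    refine MeasureTheory.Integrable.add ?_ hconst
    have h2 : IntegrableOn (fun t : ℝ => |Real.log t|) (Set.Ioc 1 (π/2)) volume := by
      have hc : ContinuousOn (fun t : ℝ => |Real.log t|) (Set.Icc 1 (π/2)) := by
        apply ContinuousOn.abs
        apply Real.continuousOn_log.mono
        intro x hx
        simp only [Set.mem_compl_iff, Set.mem_singleton_iff]
        have h1 : (1:ℝ) ≤ x := hx.1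
        intro h; rw [h] at h1; norm_num at h1
      exact hc.integrableOn_Icc.mono_set Set.Ioc_subset_Icc_self
    have := aux_integrable_abs_log.union h2
    rwa [Set.Ioc_union_Ioc_eq_Ioc (by norm_num) hpi] at this
  apply Integrable.mono' habs
  · apply ContinuousOn.aestronglyMeasurable _ measurableSet_Ioc
    apply ContinuousOn.log
    · exact (continuous_const.mul Real.continuous_sin).continuousOn
    · intro t ht
      have hs : 0 < Real.sin t := Real.sin_pos_of_pos_of_lt_pi ht.1 (by nlinarith [Real.pi_pos, ht.2])
      positivity
  · rw [ae_restrict_iff' measurableSet_Ioc]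
    apply ae_of_all
    intro t ht
    have ht0 : 0 < t := ht.1
    have htle : t ≤ π/2 := ht.2
    have hs : 0 < Real.sin t := Real.sin_pos_of_pos_of_lt_pi ht0 (by nlinarith [Real.pi_pos])
    have hupper : Real.log (2 * Real.sin t) ≤ Real.log 2 + Real.log t := by
      rw [← Real.log_mul (by norm_num) (ne_of_gt ht0)]
      apply Real.log_le_log (by positivity)
      nlinarith [Real.sin_le ht0.le]
    have hlower : Real.log t ≤ Real.log (2 * Real.sin t) := by
      apply Real.log_le_log ht0
      have h' : 2*t ≤ Real.sin t * π := by
        rw [← div_le_iff₀ Real.pi_pos]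
        have := Real.mul_le_sin ht0.le htle
        linarith [show (2/π)*t = 2*t/π from by ring]
      nlinarith [Real.pi_le_four, hs.le]
    rw [Real.norm_eq_abs, abs_le]
    constructor
    · nlinarith [neg_abs_le (Real.log t), Real.log_nonneg (by norm_num : (1:ℝ) ≤ 2)]
    · nlinarith [le_abs_self (Real.log t)]

lemma aux_abs_one_sub_exp (θ : ℝ) :
    ‖1 - Complex.exp (θ * Complex.I)‖ = 2 * |Real.sin (θ/2)| := by
  rw [Complex.exp_mul_I]
  have h : (1 : ℂ) - (Complex.cos θ + Complex.sin θ * Complex.I)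
      = Complex.ofReal (1 - Real.cos θ) + Complex.ofReal (-Real.sin θ) * Complex.I := by
    push_cast; ring
  rw [h, Complex.norm_def, Complex.normSq_add_mul_I]
  have h2 : (1 - Real.cos θ)^2 + (-Real.sin θ)^2 = (2 * Real.sin (θ/2))^2 := by
    have hs := Real.sin_sq_eq_half_sub (θ/2)
    have hd : 2 * (θ/2) = θ := by ring
    rw [hd] at hs
    nlinarith [Real.sin_sq_add_cos_sq θ]
  rw [h2, Real.sqrt_sq_eq_abs, abs_mul]
  norm_num

lemma aux_sum_log_sin (n : ℕ) (hn : 1 ≤ n) :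
    ∑ j ∈ Finset.Icc 1 (n-1), Real.log (2 * Real.sin (π * j / n)) = Real.log n := by
  have hpos : ∀ j ∈ Finset.Icc 1 (n-1), 0 < 2 * Real.sin (π * j / n) := by
    intro j hj
    rw [Finset.mem_Icc] at hj
    have h1 : (1:ℝ) ≤ (j:ℝ) := by exact_mod_cast hj.1
    have h2 : (j:ℝ) ≤ (n:ℝ) - 1 := by
      have : (j:ℝ) ≤ ((n-1 : ℕ) : ℝ) := by exact_mod_cast hj.2
      rwa [Nat.cast_sub hn, Nat.cast_one] at this
    have hn' : (0:ℝ) < n := by exact_mod_cast hn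
    have hlt : π * j / n < π := by
      rw [div_lt_iff₀ hn']
      nlinarith [Real.pi_pos]
    have hgt : 0 < π * j / n := by positivity
    have := Real.sin_pos_of_pos_of_lt_pi hgt hlt
    linarith
  have hprod : ∏ j ∈ Finset.Icc 1 (n-1), (2 * Real.sin (π * j / n)) = (n:ℝ) := by
    obtain ⟨m, rfl⟩ : ∃ m, n = m + 1 := ⟨n-1, by omega⟩
    have hμ := Complex.isPrimitiveRoot_exp (m+1) (Nat.succ_ne_zero m)
    have h := hμ.prod_one_sub_pow_eq_order
    apply_fun (‖·‖) at h
    rw [norm_prod] at h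
    push_cast at h
    have hrhs : ‖(m:ℂ) + 1‖ = (m:ℝ) + 1 := by
      rw [show ((m:ℂ)+1) = (((m+1:ℕ)):ℂ) by push_cast; ring, Complex.norm_natCast]
      push_cast; ring
    rw [hrhs] at h
    have hterm : ∀ k ∈ Finset.range m,
        ‖1 - Complex.exp (2*π*Complex.I/(m+1)) ^ (k+1)‖
          = 2 * Real.sin (π * (k+1) / (m+1)) := by
      intro k hk
      rw [Finset.mem_range] at hk
      rw [← Complex.exp_nat_mul]
      have harg : ((k+1:ℕ):ℂ) * (2*π*Complex.I/((m:ℕ)+1))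
          = ((2*π*(k+1)/(m+1) : ℝ) : ℂ) * Complex.I := by
        push_cast; ring
      rw [harg, aux_abs_one_sub_exp]
      have hhalf : (2*π*((k:ℝ)+1)/((m:ℝ)+1))/2 = π * ((k:ℝ)+1) / ((m:ℝ)+1) := by ring
      rw [hhalf]
      congr 1
      apply abs_of_pos
      apply Real.sin_pos_of_pos_of_lt_pi
      · positivity
      · rw [div_lt_iff₀ (by positivity)]
        have : (k:ℝ) + 1 < (m:ℝ) + 1 := by exact_mod_cast Nat.succ_lt_succ hk
        nlinarith [Real.pi_pos]
    rw [Finset.prod_congr rfl hterm] at h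
    calc ∏ j ∈ Finset.Icc 1 (m+1-1), (2 * Real.sin (π * j / (m+1:ℕ)))
        = ∏ k ∈ Finset.range m, (2 * Real.sin (π * ((k:ℝ)+1) / ((m:ℝ)+1))) := by
          rw [show m + 1 - 1 = m from rfl,
            show Finset.Icc 1 m = Finset.Ico 1 (m+1) by rw [Finset.Ico_add_one_right_eq_Icc],
            Finset.prod_Ico_eq_prod_range]
          apply Finset.prod_congr rfl
          intro k hk
          push_cast
          ring_nf
      _ = (m:ℝ)+1 := h
      _ = ((m+1:ℕ):ℝ) := by push_cast; ring
  rw [← Real.log_prod (fun j hj => ne_of_gt (hpos j hj)), hprod]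

lemma aux_sum_sym (n b : ℕ) (hn : 1 ≤ n) (hb : b ≤ n - 1) :
    ∑ j ∈ Finset.Icc 1 b, Real.log (2 * Real.sin (π * j / n))
      = Real.log n - ∑ j ∈ Finset.Icc 1 (n-1-b), Real.log (2 * Real.sin (π * j / n)) := by
  have hsplit : ∑ j ∈ Finset.Ioc 0 b, Real.log (2 * Real.sin (π * j / n))
      + ∑ j ∈ Finset.Ioc b (n-1), Real.log (2 * Real.sin (π * j / n))
      = ∑ j ∈ Finset.Ioc 0 (n-1), Real.log (2 * Real.sin (π * j / n)) :=
    Finset.sum_Ioc_consecutive _ (Nat.zero_le b) hb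
  have hIcc : ∀ m : ℕ, Finset.Icc 1 m = Finset.Ioc 0 m := fun m => by
    rw [← Finset.Icc_add_one_left_eq_Ioc]; rfl
  have hrefl : ∑ j ∈ Finset.Ioc b (n-1), Real.log (2 * Real.sin (π * j / n))
      = ∑ j ∈ Finset.Ioc 0 (n-1-b), Real.log (2 * Real.sin (π * j / n)) := by
    apply Finset.sum_nbij' (i := fun j => n - j) (j := fun k => n - k)
    · intro a ha
      rw [Finset.mem_Ioc] at ha ⊢
      omega
    · intro a ha
      rw [Finset.mem_Ioc] at ha ⊢
      omega
    · intro a ha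
      rw [Finset.mem_Ioc] at ha
      omega
    · intro a ha
      rw [Finset.mem_Ioc] at ha
      omega
    · intro a ha
      rw [Finset.mem_Ioc] at ha
      have han : a ≤ n := by omega
      have hn' : (0:ℝ) < n := by exact_mod_cast hn
      congr 1
      have hcast : ((n - a : ℕ) : ℝ) = (n:ℝ) - a := by
        rw [Nat.cast_sub han]
      rw [hcast]
      have harg : π * ((n:ℝ) - a) / n = π - π * a / n := by
        field_simp
      rw [harg, Real.sin_pi_sub]
  have htot : ∑ j ∈ Finset.Ioc 0 (n-1), Real.log (2 * Real.sin (π * j / n)) = Real.log n := by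
    rw [← hIcc]; exact aux_sum_log_sin n hn
  rw [hIcc, hIcc]
  rw [htot] at hsplit
  linarith [hrefl]

lemma aux_step_eval {n j₀ cc : ℕ} (hn : 1 ≤ n) (hj₀ : j₀ ∈ Finset.Icc 1 cc) {t : ℝ}
    (ht : t ∈ Set.Ioc (π*((j₀:ℝ)-1)/n) (π*(j₀:ℝ)/n)) (v : ℕ → ℝ) :
    ∑ j ∈ Finset.Icc 1 cc,
        Set.indicator (Set.Ioc (π*((j:ℝ)-1)/n) (π*(j:ℝ)/n)) (fun _ => v j) t = v j₀ := by
  have hn' : (0:ℝ) < n := by exact_mod_cast hn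
  rw [Finset.sum_eq_single_of_mem j₀ hj₀]
  · rw [Set.indicator_of_mem ht]
  · intro j hj hne
    apply Set.indicator_of_notMem
    intro hmem
    apply hne
    have h1 : π*((j:ℝ)-1)/n < π*(j₀:ℝ)/n := lt_of_lt_of_le hmem.1 ht.2
    have h2 : π*((j₀:ℝ)-1)/n < π*(j:ℝ)/n := lt_of_lt_of_le ht.1 hmem.2
    have h1' : (j:ℝ) - 1 < j₀ := by
      have := (div_lt_div_iff₀ hn' hn').mp h1
      nlinarith [Real.pi_pos, mul_pos Real.pi_pos hn']
    have h2' : (j₀:ℝ) - 1 < j := by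
      have := (div_lt_div_iff₀ hn' hn').mp h2
      nlinarith [Real.pi_pos, mul_pos Real.pi_pos hn']
    have e1 : j < j₀ + 1 := by exact_mod_cast (by push_cast; linarith : (j:ℝ) < (j₀:ℝ) + 1)
    have e2 : j₀ < j + 1 := by exact_mod_cast (by push_cast; linarith : (j₀:ℝ) < (j:ℝ) + 1)
    omega


lemma aux_ceil_mem {t : ℝ} (ht : 0 < t) {n : ℕ} (hn : 1 ≤ n) :
    t ∈ Set.Ioc (π*(((⌈(n:ℝ)*t/π⌉₊:ℕ):ℝ)-1)/n) (π*((⌈(n:ℝ)*t/π⌉₊:ℕ):ℝ)/n) := by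
  have hn' : (0:ℝ) < n := by exact_mod_cast hn
  constructor
  · rw [div_lt_iff₀ hn']
    have := Nat.ceil_lt_add_one (show (0:ℝ) ≤ (n:ℝ)*t/π by positivity)
    have h2 : ((n:ℝ)*t/π)*π = n*t := by field_simp
    nlinarith [Real.pi_pos]
  · rw [le_div_iff₀ hn']
    have := (div_le_iff₀ Real.pi_pos).mp (Nat.le_ceil ((n:ℝ)*t/π))
    linarith

lemma aux_ceil_tendsto {t : ℝ} (ht : 0 < t) :
    Tendsto (fun n : ℕ => π * ((⌈(n:ℝ)*t/π⌉₊ : ℕ) : ℝ) / n) atTop (nhds t) := by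
  have htplus : Tendsto (fun n : ℕ => t + π/(n:ℝ)) atTop (nhds t) := by
    have h := tendsto_const_div_atTop_nhds_zero_nat π
    simpa using tendsto_const_nhds.add h
  apply tendsto_of_tendsto_of_tendsto_of_le_of_le' tendsto_const_nhds htplus
  · filter_upwards [eventually_ge_atTop 1] with n hn1
    exact ((aux_ceil_mem ht hn1).2 : t ≤ _)
  · filter_upwards [eventually_ge_atTop 1] with n hn1
    have hn' : (0:ℝ) < n := by exact_mod_cast hn1
    rw [div_le_iff₀ hn']
    have hceil2 := Nat.ceil_lt_add_one (show (0:ℝ) ≤ (n:ℝ)*t/π by positivity)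
    have h2 : ((n:ℝ)*t/π) * π = n*t := by field_simp
    have h3 : (t + π/n)*n = t*n + π := by field_simp
    nlinarith [Real.pi_pos]

set_option maxHeartbeats 2000000 in
lemma aux_riemann (β : ℝ) (hβ0 : 0 ≤ β) (hβ : β ≤ 1/2) (c : ℕ → ℕ)
    (hc : Tendsto (fun n : ℕ => (c n : ℝ) / n) atTop (nhds β)) :
    Tendsto (fun n : ℕ => (π / n) * ∑ j ∈ Finset.Icc 1 (c n), Real.log (2 * Real.sin (π * j / n)))
      atTop (nhds (∫ t in (0:ℝ)..(π*β), Real.log (2 * Real.sin t))) := by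
  set f : ℝ → ℝ := fun t => Real.log (2 * Real.sin t) with hf
  set F : ℕ → ℝ → ℝ := fun n t => ∑ j ∈ Finset.Icc 1 (c n),
      Set.indicator (Set.Ioc (π*((j:ℝ)-1)/n) (π*(j:ℝ)/n)) (fun _ => f (π*(j:ℝ)/n)) t with hF
  set G : ℝ → ℝ := fun t => Set.indicator (Set.Ioc 0 (2*π/3)) (fun _ => Real.log 2) t
      + Set.indicator (Set.Ioc 0 (π/2)) (fun s => |f s|) t with hG
  have hπ := Real.pi_pos
  have hdct : Tendsto (fun n : ℕ => ∫ t, F n t) atTop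
      (nhds (∫ t, Set.indicator (Set.Ioc 0 (π*β)) f t)) := by
    apply tendsto_integral_filter_of_dominated_convergence G
    · apply Eventually.of_forall
      intro n
      apply Measurable.aestronglyMeasurable
      apply Finset.measurable_sum
      intro j _
      exact measurable_const.indicator measurableSet_Ioc
    · filter_upwards [eventually_ge_atTop 1,
        hc.eventually (gt_mem_nhds (show β < 3/5 by linarith))] with n hn h35
      apply ae_of_all
      intro t
      have hn' : (0:ℝ) < n := by exact_mod_cast hn
      by_cases hex : ∃ j ∈ Finset.Icc 1 (c n), t ∈ Set.Ioc (π*((j:ℝ)-1)/n) (π*(j:ℝ)/n)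
      · obtain ⟨j, hj, htj⟩ := hex
        have heval := aux_step_eval hn hj htj (fun j => f (π*(j:ℝ)/n))
        have hFt : F n t = f (π*(j:ℝ)/n) := heval
        rw [hFt]
        rw [Finset.mem_Icc] at hj
        have hj1 : (1:ℝ) ≤ (j:ℝ) := by exact_mod_cast hj.1
        have hjc : (j:ℝ) ≤ (c n : ℝ) := by exact_mod_cast hj.2
        have hcn : (c n : ℝ) < 3/5 * n := by rw [div_lt_iff₀ hn'] at h35; linarith
        have hx23 : π*(j:ℝ)/n ≤ 2*π/3 := by
          rw [div_le_iff₀ hn']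
          nlinarith [mul_le_mul_of_nonneg_left (show (j:ℝ) ≤ 3/5*(n:ℝ) by linarith) Real.pi_pos.le,
            mul_pos Real.pi_pos hn']
        have ht0 : 0 < t := by
          have h0 : (0:ℝ) ≤ π*((j:ℝ)-1)/n := by
            apply div_nonneg _ hn'.le
            nlinarith
          linarith [htj.1]
        have htle : t ≤ π*(j:ℝ)/n := htj.2
        have hπjπ : π*(j:ℝ)/n < π := by linarith
        have hπj0 : 0 < π*(j:ℝ)/n := by positivity
        have hsinj : 0 < Real.sin (π*(j:ℝ)/n) := Real.sin_pos_of_pos_of_lt_pi hπj0 hπjπ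
        have hub : f (π*(j:ℝ)/n) ≤ Real.log 2 := by
          apply Real.log_le_log (by positivity)
          nlinarith [Real.sin_le_one (π*(j:ℝ)/n)]
        have hlog2 : (0:ℝ) ≤ Real.log 2 := Real.log_nonneg (by norm_num)
        by_cases hhalf : π*(j:ℝ)/n ≤ π/2
        · have ht2 : t ∈ Set.Ioc 0 (π/2) := ⟨ht0, le_trans htle hhalf⟩
          have ht3 : t ∈ Set.Ioc 0 (2*π/3) := ⟨ht0, by linarith [ht2.2]⟩
          have hGt : G t = Real.log 2 + |f t| := by
            rw [hG]
            simp only []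
            rw [Set.indicator_of_mem ht3, Set.indicator_of_mem ht2]
          rw [hGt]
          have hsint : 0 < Real.sin t := Real.sin_pos_of_pos_of_lt_pi ht0 (by linarith)
          have hmono : f t ≤ f (π*(j:ℝ)/n) := by
            apply Real.log_le_log (by positivity)
            have hsin : Real.sin t ≤ Real.sin (π*(j:ℝ)/n) := by
              apply Real.strictMonoOn_sin.monotoneOn _ _ htle
              · constructor <;> [linarith; linarith]
              · constructor <;> [linarith; linarith]
            linarith
          rw [Real.norm_eq_abs, abs_le]
          constructor
          · linarith [neg_abs_le (f t)]
          · linarith [abs_nonneg (f t)]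
        · push_neg at hhalf
          have ht3 : t ∈ Set.Ioc 0 (2*π/3) := ⟨ht0, le_trans htle hx23⟩
          have hs2 : (1:ℝ)/2 ≤ Real.sin (π*(j:ℝ)/n) := by
            rw [← Real.sin_pi_sub]
            have h := Real.mul_le_sin (x := π - π*(j:ℝ)/n) (by linarith) (by linarith)
            have h1 : (2/π) * (π/3) ≤ (2/π) * (π - π*(j:ℝ)/n) :=
              mul_le_mul_of_nonneg_left (by linarith) (by positivity)
            have h3 : (2/π) * (π/3) = 2/3 := by field_simp
            linarith
          have hlbf : 0 ≤ f (π*(j:ℝ)/n) := Real.log_nonneg (by linarith)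
          have hGt : G t ≥ Real.log 2 := by
            rw [hG]
            simp only []
            rw [Set.indicator_of_mem ht3]
            have := Set.indicator_nonneg (s := Set.Ioc (0:ℝ) (π/2))
              (f := fun s => |f s|) (fun s _ => abs_nonneg _) t
            linarith
          rw [Real.norm_eq_abs]
          rw [abs_of_nonneg hlbf]
          exact le_trans hub hGt
      · push_neg at hex
        have hFt : F n t = 0 :=
          Finset.sum_eq_zero fun j hj => Set.indicator_of_notMem (hex j hj) _
        rw [hFt, norm_zero, hG]
        apply add_nonneg
        · exact Set.indicator_nonneg (fun _ _ => Real.log_nonneg (by norm_num)) t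
        · exact Set.indicator_nonneg (fun s _ => abs_nonneg _) t
    · rw [hG]
      apply Integrable.add
      · rw [integrable_indicator_iff measurableSet_Ioc]
        exact MeasureTheory.integrableOn_const measure_Ioc_lt_top.ne
      · rw [integrable_indicator_iff measurableSet_Ioc]
        exact aux_integrable_logsin.abs
    · have h0 : ({(0:ℝ)} : Set ℝ)ᶜ ∈ ae volume := compl_mem_ae_iff.mpr (measure_singleton 0)
      have hβm : ({π*β} : Set ℝ)ᶜ ∈ ae volume := compl_mem_ae_iff.mpr (measure_singleton _)
      filter_upwards [h0, hβm] with t ht0 htβ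
      simp only [Set.mem_compl_iff, Set.mem_singleton_iff] at ht0 htβ
      rcases Ne.lt_or_gt ht0 with htneg | htpos
      · have hzero : ∀ n : ℕ, F n t = 0 := by
          intro n
          apply Finset.sum_eq_zero
          intro j hj
          apply Set.indicator_of_notMem
          intro hmem
          rw [Finset.mem_Icc] at hj
          have hj1 : (1:ℝ) ≤ (j:ℝ) := by exact_mod_cast hj.1
          have h0' : (0:ℝ) ≤ π*((j:ℝ)-1)/n := by
            apply div_nonneg _ (Nat.cast_nonneg n)
            nlinarith
          linarith [hmem.1]
        rw [Set.indicator_of_notMem (by intro hmem; linarith [hmem.1])]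
        exact tendsto_const_nhds.congr (fun n => (hzero n).symm)
      · rcases Ne.lt_or_gt htβ with htlt | htgt
        · have htπ : t < π := by
            nlinarith [mul_le_mul_of_nonneg_left hβ Real.pi_pos.le]
          have hsin : 0 < Real.sin t := Real.sin_pos_of_pos_of_lt_pi htpos htπ
          have hmem : t ∈ Set.Ioc 0 (π*β) := ⟨htpos, htlt.le⟩
          rw [Set.indicator_of_mem hmem]
          have hcont : ContinuousAt f t := by
            apply ContinuousAt.log
            · exact (continuous_const.mul Real.continuous_sin).continuousAt
            · positivity
          have hulim : Tendsto (fun n : ℕ => f (π * ((⌈(n:ℝ)*t/π⌉₊ : ℕ) : ℝ) / n)) atTop (nhds (f t)) :=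
            hcont.tendsto.comp (aux_ceil_tendsto htpos)
          have hev : ∀ᶠ n in atTop, F n t = f (π * ((⌈(n:ℝ)*t/π⌉₊ : ℕ) : ℝ) / n) := by
            filter_upwards [eventually_ge_atTop 1,
              hc.eventually (lt_mem_nhds (show t/π < β by
                rw [div_lt_iff₀ Real.pi_pos]; linarith))] with n hn1 hcn
            have hn' : (0:ℝ) < n := by exact_mod_cast hn1
            have hj₀1 : 1 ≤ ⌈(n:ℝ)*t/π⌉₊ := Nat.ceil_pos.mpr (by positivity)
            have hj₀c : ⌈(n:ℝ)*t/π⌉₊ ≤ c n := by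
              rw [Nat.ceil_le]
              have := (div_lt_div_iff₀ Real.pi_pos hn').mp hcn
              rw [div_le_iff₀ Real.pi_pos]
              nlinarith
            exact aux_step_eval hn1 (Finset.mem_Icc.mpr ⟨hj₀1, hj₀c⟩) (aux_ceil_mem htpos hn1) _
          exact Tendsto.congr' (hev.mono fun _ h => h.symm) hulim
        · rw [Set.indicator_of_notMem (fun hmem => absurd hmem.2 (not_le.mpr htgt))]
          have hev : ∀ᶠ n in atTop, F n t = 0 := by
            filter_upwards [eventually_ge_atTop 1,
              hc.eventually (gt_mem_nhds (show β < t/π by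
                rw [lt_div_iff₀ Real.pi_pos]; linarith))] with n hn1 hcn
            have hn' : (0:ℝ) < n := by exact_mod_cast hn1
            apply Finset.sum_eq_zero
            intro j hj
            apply Set.indicator_of_notMem
            intro hmem
            rw [Finset.mem_Icc] at hj
            have hjc : (j:ℝ) ≤ c n := by exact_mod_cast hj.2
            have h1 : (c n:ℝ)*π < t*n := by
              have := (div_lt_div_iff₀ hn' Real.pi_pos).mp hcn
              linarith
            have h2 : t ≤ π*(j:ℝ)/n := hmem.2
            rw [le_div_iff₀ hn'] at h2
            nlinarith [mul_le_mul_of_nonneg_left hjc Real.pi_pos.le]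
          exact Tendsto.congr' (hev.mono fun _ h => h.symm) tendsto_const_nhds
  have hind : (∫ t, Set.indicator (Set.Ioc 0 (π*β)) f t)
      = ∫ t in (0:ℝ)..(π*β), f t := by
    rw [MeasureTheory.integral_indicator measurableSet_Ioc,
      intervalIntegral.integral_of_le (by positivity)]
  rw [hind] at hdct
  apply hdct.congr'
  filter_upwards [eventually_ge_atTop 1] with n hn1
  have hn' : (0:ℝ) < n := by exact_mod_cast hn1
  rw [hF]
  simp only []
  rw [MeasureTheory.integral_finset_sum]
  · rw [Finset.mul_sum]
    apply Finset.sum_congr rfl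
    intro j hj
    rw [MeasureTheory.integral_indicator_const _ measurableSet_Ioc, Real.volume_real_Ioc]
    have harg : π*(j:ℝ)/n - π*((j:ℝ)-1)/n = π/n := by field_simp; ring
    rw [harg, max_eq_left (by positivity), smul_eq_mul]
  · intro j _
    rw [integrable_indicator_iff measurableSet_Ioc]
    exact MeasureTheory.integrableOn_const measure_Ioc_lt_top.ne

lemma aux_ii {x : ℝ} (h0 : 0 ≤ x) (h2 : x ≤ π/2) :
    IntervalIntegrable (fun t => Real.log (2 * Real.sin t)) volume 0 x := by
  rw [intervalIntegrable_iff]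
  apply aux_integrable_logsin.mono_set
  rw [Set.uIoc_of_le h0]
  exact Set.Ioc_subset_Ioc_right h2

lemma aux_fun_eq : (fun x : ℝ => Real.log (2 * Real.sin (π - x))) = fun x => Real.log (2 * Real.sin x) := by
  funext x
  rw [Real.sin_pi_sub]

lemma aux_ii_refl {x : ℝ} (h0 : π/2 ≤ x) (h2 : x ≤ π) :
    IntervalIntegrable (fun t => Real.log (2 * Real.sin t)) volume x π := by
  have h := (aux_ii (x := π - x) (by linarith) (by linarith)).comp_sub_left π
  rw [aux_fun_eq] at h
  simpa using h.symm

lemma aux_reflect (γ : ℝ) :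
    (∫ x in (0:ℝ)..(π - γ), Real.log (2 * Real.sin x)) = ∫ x in γ..π, Real.log (2 * Real.sin x) := by
  have h := intervalIntegral.integral_comp_sub_left (a := (0:ℝ)) (b := π - γ)
    (fun x => Real.log (2 * Real.sin x)) π
  rw [aux_fun_eq] at h
  rw [h, sub_sub_cancel, sub_zero]

lemma aux_half_div : Tendsto (fun n : ℕ => ((n/2 : ℕ) : ℝ) / n) atTop (nhds (1/2 : ℝ)) := by
  have hlow : Tendsto (fun n : ℕ => 1/2 - 1/(n:ℝ)) atTop (nhds (1/2 : ℝ)) := by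
    have h := tendsto_const_div_atTop_nhds_zero_nat (𝕜 := ℝ) 1
    simpa using tendsto_const_nhds.sub h
  apply tendsto_of_tendsto_of_tendsto_of_le_of_le' hlow tendsto_const_nhds
  · filter_upwards [eventually_ge_atTop 1] with n hn1
    have hn' : (0:ℝ) < n := by exact_mod_cast hn1
    have hint : n ≤ 2*(n/2)+1 := by omega
    have h1 : (n:ℝ) ≤ 2*((n/2:ℕ):ℝ) + 1 := by exact_mod_cast hint
    rw [le_div_iff₀ hn']
    have hexp : (1/2 - 1/(n:ℝ))*n = n/2 - 1 := by field_simp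
    linarith
  · filter_upwards [eventually_ge_atTop 1] with n hn1
    have hn' : (0:ℝ) < n := by exact_mod_cast hn1
    have hint : 2*(n/2) ≤ n := by omega
    have h1 : 2*((n/2:ℕ):ℝ) ≤ (n:ℝ) := by exact_mod_cast hint
    rw [div_le_iff₀ hn']
    linarith

lemma aux_half_div' : Tendsto (fun n : ℕ => ((n - 1 - n/2 : ℕ) : ℝ) / n) atTop (nhds (1/2 : ℝ)) := by
  have hlow : Tendsto (fun n : ℕ => 1/2 - 2/(n:ℝ)) atTop (nhds (1/2 : ℝ)) := by
    have h := tendsto_const_div_atTop_nhds_zero_nat (𝕜 := ℝ) 2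
    simpa using tendsto_const_nhds.sub h
  apply tendsto_of_tendsto_of_tendsto_of_le_of_le' hlow tendsto_const_nhds
  · filter_upwards [eventually_ge_atTop 1] with n hn1
    have hn' : (0:ℝ) < n := by exact_mod_cast hn1
    have hint : n ≤ 2*(n-1-n/2)+4 := by omega
    have h1 : (n:ℝ) ≤ 2*((n-1-n/2:ℕ):ℝ) + 4 := by exact_mod_cast hint
    rw [le_div_iff₀ hn']
    have hexp : (1/2 - 2/(n:ℝ))*n = n/2 - 2 := by field_simp
    linarith
  · filter_upwards [eventually_ge_atTop 1] with n hn1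
    have hn' : (0:ℝ) < n := by exact_mod_cast hn1
    have hint : 2*(n-1-n/2) ≤ n := by omega
    have h1 : 2*((n-1-n/2:ℕ):ℝ) ≤ (n:ℝ) := by exact_mod_cast hint
    rw [div_le_iff₀ hn']
    linarith

lemma aux_log_div : Tendsto (fun n : ℕ => (π/(n:ℝ)) * Real.log n) atTop (nhds 0) := by
  have h1 : Tendsto (fun x : ℝ => Real.log x / x) atTop (nhds 0) :=
    Real.isLittleO_log_id_atTop.tendsto_div_nhds_zero
  have h2 : Tendsto (fun n : ℕ => Real.log n / n) atTop (nhds 0) :=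
    h1.comp tendsto_natCast_atTop_atTop
  have h3 := h2.const_mul π
  rw [mul_zero] at h3
  apply h3.congr
  intro n
  ring

lemma aux_int_half : (∫ t in (0:ℝ)..(π*(1/2:ℝ)), Real.log (2 * Real.sin t)) = 0 := by
  have hA := aux_riemann (1/2) (by norm_num) le_rfl (fun n => n/2) aux_half_div
  have hB := aux_riemann (1/2) (by norm_num) le_rfl (fun n => n - 1 - n/2) aux_half_div'
  have hC : Tendsto (fun n : ℕ => (π/(n:ℝ)) * Real.log n
      - (π / n) * ∑ j ∈ Finset.Icc 1 (n - 1 - n/2), Real.log (2 * Real.sin (π * j / n)))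
      atTop (nhds (0 - ∫ t in (0:ℝ)..(π*(1/2:ℝ)), Real.log (2 * Real.sin t))) :=
    aux_log_div.sub hB
  have heq : ∀ᶠ n : ℕ in atTop,
      (π / n) * ∑ j ∈ Finset.Icc 1 (n/2), Real.log (2 * Real.sin (π * j / n))
        = (π/(n:ℝ)) * Real.log n
          - (π / n) * ∑ j ∈ Finset.Icc 1 (n - 1 - n/2), Real.log (2 * Real.sin (π * j / n)) := by
    filter_upwards [eventually_ge_atTop 2] with n hn2
    rw [aux_sum_sym n (n/2) (by omega) (by omega)]
    ring
  have := tendsto_nhds_unique hA (hC.congr' (heq.mono fun _ h => h.symm))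
  linarith

lemma aux_lob_eq {α : ℝ} (h0 : 0 ≤ α) (h1 : α ≤ 1) :
    lob (π*α) = -∫ t in (0:ℝ)..(π*α), Real.log (2 * Real.sin t) := by
  unfold lob
  congr 1
  apply intervalIntegral.integral_congr
  intro t ht
  rw [Set.uIcc_of_le (by positivity)] at ht
  have hsin : 0 ≤ Real.sin t := Real.sin_nonneg_of_nonneg_of_le_pi ht.1
    (le_trans ht.2 (by nlinarith [Real.pi_pos]))
  simp only []
  rw [abs_of_nonneg (by linarith : (0:ℝ) ≤ 2 * Real.sin t)]

/-- for `α ∈ [0,1]` and naturals `bₙ < n` with `bₙ/n → α`, the sums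
`-(π/n)(Σ_{j=1}^{n-1} log(2 sin(πj/n)) + Σ_{j=1}^{bₙ} log(2 sin(πj/n)))` converge to `Λ(πα)`. -/
theorem shifted_quantum_factorial_asymptotics (α : ℝ) (hα : α ∈ Set.Icc (0:ℝ) 1)
    (b : ℕ → ℕ) (hb : ∀ n, 2 ≤ n → b n < n)
    (hlim : Tendsto (fun n : ℕ => (b n : ℝ) / n) atTop (nhds α)) :
    Tendsto (fun n : ℕ =>
        -(Real.pi / n) *
          ((∑ j ∈ Finset.Icc 1 (n - 1), Real.log (2 * Real.sin (Real.pi * j / n))) +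
            ∑ j ∈ Finset.Icc 1 (b n), Real.log (2 * Real.sin (Real.pi * j / n))))
      atTop (nhds (lob (Real.pi * α))) := by
  obtain ⟨hα0, hα1⟩ := hα
  by_cases hα2 : α ≤ 1/2
  · have hB := aux_riemann α hα0 hα2 b hlim
    have hcomb := aux_log_div.neg.sub hB
    have hval : lob (π*α) = -0 - ∫ t in (0:ℝ)..(π*α), Real.log (2 * Real.sin t) := by
      rw [aux_lob_eq hα0 hα1]; ring
    rw [hval]
    apply hcomb.congr'
    filter_upwards [eventually_ge_atTop 1] with n hn1
    rw [aux_sum_log_sin n hn1]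
    ring
  · push_neg at hα2
    set c : ℕ → ℕ := fun n => n - 1 - b n with hc
    have hπ := Real.pi_pos
    have hcc : Tendsto (fun n : ℕ => (c n : ℝ) / n) atTop (nhds (1 - α)) := by
      have haux : Tendsto (fun n : ℕ => 1 - 1/(n:ℝ) - (b n:ℝ)/n) atTop (nhds (1 - 0 - α)) :=
        (tendsto_const_nhds.sub (tendsto_const_div_atTop_nhds_zero_nat 1)).sub hlim
      rw [show (1:ℝ) - 0 - α = 1 - α by ring] at haux
      apply haux.congr'
      filter_upwards [eventually_ge_atTop 2] with n hn2
      have hbn : b n < n := hb n hn2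
      have hn' : (0:ℝ) < n := by exact_mod_cast (by omega : 0 < n)
      have hcast : ((n - 1 - b n : ℕ):ℝ) = (n:ℝ) - 1 - (b n:ℝ) := by
        rw [Nat.cast_sub (by omega : b n ≤ n - 1), Nat.cast_sub (by omega : 1 ≤ n)]
        norm_num
      rw [show c n = n - 1 - b n from rfl, hcast]
      field_simp
    have hB := aux_riemann (1-α) (by linarith) (by linarith) c hcc
    have hcomb := (aux_log_div.const_mul (-2)).add hB
    have h1 : IntervalIntegrable (fun t => Real.log (2 * Real.sin t)) volume 0 (π*α) := by
      apply IntervalIntegrable.trans (b := π/2) (aux_ii (by positivity) le_rfl)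
      apply IntervalIntegrable.mono_set (aux_ii_refl (le_refl (π/2)) (by linarith))
      apply Set.uIcc_subset_uIcc Set.left_mem_uIcc
      rw [Set.uIcc_of_le (by linarith)]
      constructor
      · nlinarith
      · nlinarith
    have h2 : IntervalIntegrable (fun t => Real.log (2 * Real.sin t)) volume (π*α) π :=
      aux_ii_refl (by nlinarith) (by nlinarith)
    have hadd := intervalIntegral.integral_add_adjacent_intervals h1 h2
    have hrefl2 : (∫ t in (0:ℝ)..(π*(1-α)), Real.log (2 * Real.sin t))
        = ∫ t in (π*α)..π, Real.log (2 * Real.sin t) := by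
      rw [show π*(1-α) = π - π*α by ring, aux_reflect]
    have htot : (∫ t in (0:ℝ)..π, Real.log (2 * Real.sin t)) = 0 := by
      have hsplit := intervalIntegral.integral_add_adjacent_intervals
        (aux_ii (by positivity) le_rfl : IntervalIntegrable _ volume 0 (π/2))
        (aux_ii_refl le_rfl (by linarith))
      have hh : (∫ t in (0:ℝ)..(π/2), Real.log (2 * Real.sin t)) = 0 := by
        have := aux_int_half
        rwa [show π*(1/2:ℝ) = π/2 by ring] at this
      have hh2 : (∫ t in (π/2)..π, Real.log (2 * Real.sin t)) = 0 := by
        rw [← aux_reflect (π/2), show π - π/2 = π/2 by ring, hh]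
      rw [← hsplit, hh, hh2]
      norm_num
    have hval : lob (π*α) = -2*0 + ∫ t in (0:ℝ)..(π*(1-α)), Real.log (2 * Real.sin t) := by
      rw [aux_lob_eq hα0 hα1, hrefl2]
      linarith
    rw [hval]
    apply hcomb.congr'
    filter_upwards [eventually_ge_atTop 2] with n hn2
    have hn1 : 1 ≤ n := by omega
    have hbn : b n < n := hb n hn2
    rw [aux_sum_log_sin n hn1, aux_sum_sym n (b n) hn1 (by omega)]
    rw [show n - 1 - b n = c n from rfl]
    ring
end

section
/- Let τ₁, τ₂, τ₃ ∈ (0,1) be reals with 1 < τ₁+τ₂+τ₃ < 2. Let (d₁ⁿ), (d₂ⁿ), (d₃ⁿ) be sequences of natural numbers with lim_{n→∞} d_kⁿ/n = τ_k for k = 1,2,3, and set sₙ = d₁ⁿ + d₂ⁿ + d₃ⁿ. Then lim_{n→∞} (2π/n)·( Σ_{k=1}^{3} Σ_{j=1}^{d_kⁿ} log(2·sin(πj/n)) − Σ_{j=1, j≠n}^{sₙ+1} log|2·sin(πj/n)| ) = 2·( Λ(π(τ₁+τ₂+τ₃)) − Λ(πτ₁) − Λ(πτ₂) − Λ(πτ₃)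 ), where the inner sums and the limit are taken for n large enough that n < sₙ + 1 < 2n (which holds eventually, so that every term log|2 sin(πj/n)| with j ≠ n is finite). -/
open Real Filter Finset
open MeasureTheory intervalIntegral

noncomputable def LL (x : ℝ) : ℝ := Real.log |2 * Real.sin x|

noncomputable def II (x : ℝ) : ℝ := ∫ t in (0:ℝ)..x, LL t




lemma LL_le (x : ℝ) : LL x ≤ Real.log 2 := by
  unfold LL
  rcases eq_or_ne (|2 * Real.sin x|) 0 with h | h
  · rw [h, Real.log_zero]; positivity
  · apply Real.log_le_log (by positivity)
    calc |2 * Real.sin x| = 2 * |Real.sin x| := by rw [abs_mul]; norm_num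
    _ ≤ 2 * 1 := by nlinarith [Real.abs_sin_le_one x]
    _ = 2 := by norm_num

lemma LL_per (x : ℝ) : LL (x + Real.pi) = LL x := by
  unfold LL; rw [Real.sin_add_pi, mul_neg, abs_neg]

lemma LL_refl (x : ℝ) : LL (Real.pi - x) = LL x := by
  unfold LL; rw [Real.sin_pi_sub]

lemma LL_eq_of_pos {x : ℝ} (h1 : 0 < x) (h2 : x < Real.pi) :
    LL x = Real.log (2 * Real.sin x) := by
  unfold LL; rw [abs_of_pos (by nlinarith [Real.sin_pos_of_pos_of_lt_pi h1 h2])]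

lemma LL_mono {x y : ℝ} (hx : 0 < x) (hxy : x ≤ y) (hy : y ≤ Real.pi / 2) :
    LL x ≤ LL y := by
  have hsx : 0 < Real.sin x := Real.sin_pos_of_pos_of_lt_pi hx
    (lt_of_le_of_lt (hxy.trans hy) (by linarith [Real.pi_pos]))
  have hsy : Real.sin x ≤ Real.sin y :=
    Real.sin_le_sin_of_le_of_le_pi_div_two (by linarith) hy hxy
  rw [LL_eq_of_pos hx (by linarith [Real.pi_pos]),
      LL_eq_of_pos (lt_of_lt_of_le hx hxy) (by linarith [Real.pi_pos])]
  exact Real.log_le_log (by positivity) (by linarith)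

lemma LL_anti {x y : ℝ} (hx : Real.pi / 2 ≤ x) (hxy : x ≤ y) (hy : y < Real.pi) :
    LL y ≤ LL x := by
  have := LL_mono (x := Real.pi - y) (y := Real.pi - x) (by linarith) (by linarith) (by linarith)
  rwa [LL_refl, LL_refl] at this

lemma abs_log_le {x : ℝ} (hx : 0 < x) : |Real.log x| ≤ 2 * x ^ (-(1:ℝ)/2) + x := by
  have h1 : Real.log x ≤ x - 1 := Real.log_le_sub_one_of_pos hx
  have hr : (0:ℝ) < x ^ (-(1:ℝ)/2) := Real.rpow_pos_of_pos hx _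
  have h2 : Real.log (x ^ (-(1:ℝ)/2)) = (-(1:ℝ)/2) * Real.log x := Real.log_rpow hx _
  have h3 : Real.log (x ^ (-(1:ℝ)/2)) ≤ x ^ (-(1:ℝ)/2) - 1 := Real.log_le_sub_one_of_pos hr
  rw [abs_le]; constructor <;> nlinarith

lemma measurable_LL : Measurable LL :=
  Real.measurable_log.comp (measurable_const.mul Real.continuous_sin.measurable).abs

lemma logInt : IntegrableOn Real.log (Set.Ioc 0 (Real.pi/2)) volume := by
  have hle : (0:ℝ) ≤ Real.pi/2 := by positivity
  have gInt : IntervalIntegrable (fun x : ℝ => 2 * x ^ (-(1:ℝ)/2) + x) volume 0 (Real.pi/2) :=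
    ((intervalIntegral.intervalIntegrable_rpow' (by norm_num)).const_mul 2).add
      intervalIntegrable_id
  refine Integrable.mono' ((intervalIntegrable_iff_integrableOn_Ioc_of_le hle).1 gInt)
    Real.measurable_log.aestronglyMeasurable ?_
  refine (ae_restrict_iff' measurableSet_Ioc).2 (ae_of_all _ fun x hx => ?_)
  rw [Real.norm_eq_abs]; exact abs_log_le hx.1

lemma LLInt1 : IntervalIntegrable LL volume 0 (Real.pi/2) := by
  have hle : (0:ℝ) ≤ Real.pi/2 := by positivity
  rw [intervalIntegrable_iff_integrableOn_Ioc_of_le hle]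
  have gInt : IntegrableOn (fun x : ℝ => 1 + |Real.log x|) (Set.Ioc 0 (Real.pi/2)) volume := by
    refine (integrableOn_const measure_Ioc_lt_top.ne).add ?_
    simpa [Real.norm_eq_abs, IntegrableOn] using logInt.norm
  refine Integrable.mono' gInt measurable_LL.aestronglyMeasurable ?_
  refine (ae_restrict_iff' measurableSet_Ioc).2 (ae_of_all _ fun x hx => ?_)
  obtain ⟨hx0, hx2⟩ := hx
  have hxpi : x < Real.pi := lt_of_le_of_lt hx2 (by linarith [Real.pi_pos])
  have hs : 0 < Real.sin x := Real.sin_pos_of_pos_of_lt_pi hx0 hxpi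
  have hsx : Real.sin x ≤ x := Real.sin_le hx0.le
  have hms : 2 / Real.pi * x ≤ Real.sin x := Real.mul_le_sin hx0.le hx2
  have hLL : LL x = Real.log (2 * Real.sin x) := by
    unfold LL; rw [abs_of_pos (by positivity)]
  have hub : Real.log (2 * Real.sin x) ≤ Real.log 2 + Real.log x := by
    rw [← Real.log_mul (by norm_num) (ne_of_gt hx0)]
    exact Real.log_le_log (by positivity) (by nlinarith)
  have hlb : Real.log (4 / Real.pi) + Real.log x ≤ Real.log (2 * Real.sin x) := by
    rw [← Real.log_mul (by positivity) (ne_of_gt hx0)]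
    refine Real.log_le_log (by positivity) ?_
    rw [div_mul_eq_mul_div, div_le_iff₀ Real.pi_pos]
    rw [div_mul_eq_mul_div, div_le_iff₀ Real.pi_pos] at hms
    linarith
  have hlog2 : Real.log 2 ≤ 1 := by linarith [Real.log_le_sub_one_of_pos (by norm_num : (0:ℝ) < 2)]
  have hlognn : 0 ≤ Real.log (4 / Real.pi) :=
    Real.log_nonneg (by rw [le_div_iff₀ Real.pi_pos]; nlinarith [Real.pi_le_four])
  rw [Real.norm_eq_abs, hLL, abs_le]
  constructor
  · nlinarith [neg_abs_le (Real.log x)]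
  · nlinarith [le_abs_self (Real.log x)]

lemma LLInt0pi : IntervalIntegrable LL volume 0 Real.pi := by
  have h2 := LLInt1.comp_sub_left Real.pi
  simp only [LL_refl, sub_zero, sub_half] at h2
  exact LLInt1.trans h2.symm

lemma LL_int {a b : ℝ} (ha : 0 ≤ a) (ha' : a ≤ Real.pi) (hb : 0 ≤ b) (hb' : b ≤ Real.pi) :
    IntervalIntegrable LL volume a b := by
  refine LLInt0pi.mono_set ?_
  rw [Set.uIcc_of_le Real.pi_pos.le]
  exact Set.uIcc_subset_Icc ⟨ha, ha'⟩ ⟨hb, hb'⟩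

lemma cell_le {a b c : ℝ} (hab : a ≤ b) (hi : IntervalIntegrable LL volume a b)
    (hb : ∀ t ∈ Set.Ioc a b, LL t ≤ c) : ∫ t in a..b, LL t ≤ (b - a) * c := by
  rw [intervalIntegral.integral_of_le hab]
  calc ∫ t in Set.Ioc a b, LL t ≤ ∫ _t in Set.Ioc a b, c :=
        setIntegral_mono_on ((intervalIntegrable_iff_integrableOn_Ioc_of_le hab).1 hi)
          (integrableOn_const measure_Ioc_lt_top.ne) measurableSet_Ioc hb
  _ = (b - a) * c := by
        rw [setIntegral_const, Real.volume_real_Ioc_of_le hab, smul_eq_mul]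

lemma le_cell {a b c : ℝ} (hab : a ≤ b) (hi : IntervalIntegrable LL volume a b)
    (hb : ∀ t ∈ Set.Ioc a b, c ≤ LL t) : (b - a) * c ≤ ∫ t in a..b, LL t := by
  rw [intervalIntegral.integral_of_le hab]
  calc (b - a) * c = ∫ _t in Set.Ioc a b, c := by
        rw [setIntegral_const, Real.volume_real_Ioc_of_le hab, smul_eq_mul]
  _ ≤ ∫ t in Set.Ioc a b, LL t :=
        setIntegral_mono_on (integrableOn_const measure_Ioc_lt_top.ne)
          ((intervalIntegrable_iff_integrableOn_Ioc_of_le hab).1 hi) measurableSet_Ioc hb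

lemma II_cont : ContinuousOn II (Set.Icc 0 Real.pi) := by
  have h := intervalIntegral.continuousOn_primitive_interval (a := (0:ℝ)) (b := Real.pi)
    (μ := volume) (f := LL) ?_
  · rwa [Set.uIcc_of_le Real.pi_pos.le] at h
  · rw [Set.uIcc_of_le Real.pi_pos.le]
    exact (intervalIntegrable_iff_integrableOn_Icc_of_le Real.pi_pos.le).1 LLInt0pi

lemma tendsto_II {u : ℕ → ℝ} {x : ℝ} (hx : x ∈ Set.Icc 0 Real.pi)
    (hu : Tendsto u atTop (nhds x)) (hmem : ∀ᶠ n in atTop, u n ∈ Set.Icc 0 Real.pi) :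
    Tendsto (fun n => II (u n)) atTop (nhds (II x)) :=
  (II_cont x hx).tendsto.comp (tendsto_nhdsWithin_iff.2 ⟨hu, hmem⟩)

lemma II_zero : II 0 = 0 := intervalIntegral.integral_same

section aux
variable {n : ℕ}

lemma aux_nonneg (i : ℕ) : 0 ≤ Real.pi * i / n :=
  div_nonneg (mul_nonneg Real.pi_pos.le (Nat.cast_nonneg i)) (Nat.cast_nonneg n)

lemma aux_pos {i : ℕ} (hn : 1 ≤ n) (hi : 1 ≤ i) : 0 < Real.pi * i / n := by
  have h0 : (0:ℝ) < n := by exact_mod_cast hn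
  have h1 : (0:ℝ) < i := by exact_mod_cast hi
  positivity

lemma aux_le_pi {i : ℕ} (hn : 1 ≤ n) (hi : (i:ℝ) ≤ n) : Real.pi * i / n ≤ Real.pi := by
  have h0 : (0:ℝ) < n := by exact_mod_cast hn
  rw [div_le_iff₀ h0]
  nlinarith [Real.pi_pos]

lemma aux_mem_s3 {i : ℕ} (hn : 1 ≤ n) (hi : (i:ℝ) ≤ n) :
    Real.pi * i / n ∈ Set.Icc 0 Real.pi := ⟨aux_nonneg i, aux_le_pi hn hi⟩

lemma aux_int {i j : ℕ} (hn : 1 ≤ n) (hi : (i:ℝ) ≤ n) (hj : (j:ℝ) ≤ n) :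
    IntervalIntegrable LL volume (Real.pi * i / n) (Real.pi * j / n) :=
  LL_int (aux_nonneg i) (aux_le_pi hn hi) (aux_nonneg j) (aux_le_pi hn hj)

lemma aux_amono {i j : ℕ} (h : i ≤ j) : Real.pi * i / n ≤ Real.pi * (j:ℝ) / n := by
  have hij : (i:ℝ) ≤ j := by exact_mod_cast h
  gcongr

lemma aux_step (i : ℕ) : Real.pi * ((i+1:ℕ):ℝ) / n - Real.pi * i / n = Real.pi / n := by
  push_cast; ring

lemma aux_half {i : ℕ} (h : 2*i ≤ n) : Real.pi * i / n ≤ Real.pi / 2 := by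
  rcases Nat.eq_zero_or_pos n with h0 | h0
  · subst h0
    have hi0 : i = 0 := by omega
    subst hi0
    simp
    positivity
  have hn0 : (0:ℝ) < n := by exact_mod_cast h0
  rw [div_le_div_iff₀ hn0 (by norm_num : (0:ℝ) < 2)]
  have : ((2*i:ℕ):ℝ) ≤ n := by exact_mod_cast h
  push_cast at this
  nlinarith [Real.pi_pos]

lemma aux_halfge {i : ℕ} (hn : 1 ≤ n) (h : n ≤ 2*i) : Real.pi / 2 ≤ Real.pi * i / n := by
  have hn0 : (0:ℝ) < n := by exact_mod_cast hn
  rw [div_le_div_iff₀ (by norm_num : (0:ℝ) < 2) hn0]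
  have : (n:ℝ) ≤ ((2*i:ℕ):ℝ) := by exact_mod_cast h
  push_cast at this
  nlinarith [Real.pi_pos]

lemma aux_lt_pi {i : ℕ} (h : (i:ℝ) < n) : Real.pi * i / n < Real.pi := by
  have h0 : (0:ℝ) < n := lt_of_le_of_lt (Nat.cast_nonneg i) h
  rw [div_lt_iff₀ h0]
  nlinarith [Real.pi_pos]

lemma sum_adj (hn : 1 ≤ n) (p K : ℕ) (hpK : ((p+K:ℕ):ℝ) ≤ n) :
    (∑ i ∈ Finset.range K,
        ∫ t in (Real.pi * ((p+i:ℕ):ℝ) / n)..(Real.pi * ((p+i+1:ℕ):ℝ) / n), LL t)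
      = II (Real.pi * ((p+K:ℕ):ℝ) / n) - II (Real.pi * (p:ℝ) / n) := by
  have hp : (p:ℝ) ≤ n := le_trans (by exact_mod_cast Nat.le_add_right p K) hpK
  have hcast : ∀ i, i ≤ K → ((p+i:ℕ):ℝ) ≤ n := fun i hi =>
    le_trans (by exact_mod_cast Nat.add_le_add_left hi p) hpK
  have hint : ∀ k, k < K → IntervalIntegrable LL volume (Real.pi * ((p+k:ℕ):ℝ) / n)
      (Real.pi * ((p+(k+1):ℕ):ℝ) / n) :=
    fun k hk => aux_int hn (hcast k hk.le) (hcast (k+1) hk)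
  calc (∑ i ∈ Finset.range K,
        ∫ t in (Real.pi * ((p+i:ℕ):ℝ) / n)..(Real.pi * ((p+i+1:ℕ):ℝ) / n), LL t)
      = ∫ t in (Real.pi * ((p:ℕ):ℝ) / n)..(Real.pi * ((p+K:ℕ):ℝ) / n), LL t :=
        intervalIntegral.sum_integral_adjacent_intervals
          (a := fun i : ℕ => Real.pi * ((p+i:ℕ):ℝ) / n) hint
  _ = II (Real.pi * ((p+K:ℕ):ℝ) / n) - II (Real.pi * (p:ℝ) / n) := by
        have h0a : IntervalIntegrable LL volume 0 (Real.pi * (p:ℝ) / n) :=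
          LL_int le_rfl Real.pi_pos.le (aux_nonneg p) (aux_le_pi hn hp)
        have hab : IntervalIntegrable LL volume (Real.pi * (p:ℝ) / n)
            (Real.pi * ((p+K:ℕ):ℝ) / n) := aux_int hn hp hpK
        have h := intervalIntegral.integral_add_adjacent_intervals h0a hab
        unfold II
        linarith

lemma ineq_lower_inc (hn : 1 ≤ n) (J : ℕ) (hJ2 : 2*J ≤ n) :
    II (Real.pi * (J:ℝ) / n) ≤
      Real.pi / n * ∑ j ∈ Finset.Ico 1 (J+1), LL (Real.pi * j / n) := by
  have hadj := sum_adj hn 0 J (by exact_mod_cast (by omega : 0 + J ≤ n))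
  simp only [Nat.zero_add, Nat.cast_zero, mul_zero, zero_div, II_zero, sub_zero] at hadj
  rw [Finset.sum_Ico_eq_sum_range]
  simp only [Nat.add_sub_cancel]
  have hterm : ∀ i ∈ Finset.range J,
      (∫ t in (Real.pi * (i:ℝ) / n)..(Real.pi * ((i+1:ℕ):ℝ) / n), LL t)
        ≤ Real.pi / n * LL (Real.pi * ((1+i:ℕ):ℝ) / n) := by
    intro i hi
    rw [Finset.mem_range] at hi
    have h1 : (1+i) = (i+1) := by omega
    rw [h1]
    have hineq := cell_le (aux_amono (n := n) (Nat.le_succ i))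
      (aux_int hn (by exact_mod_cast (by omega : i ≤ n)) (by exact_mod_cast (by omega : i+1 ≤ n)))
      (fun t ht => LL_mono (lt_of_le_of_lt (aux_nonneg i) ht.1) ht.2
        (aux_half (by omega : 2*(i+1) ≤ n)))
    rwa [aux_step] at hineq
  calc II (Real.pi * (J:ℝ) / n)
      = ∑ i ∈ Finset.range J,
          ∫ t in (Real.pi * (i:ℝ) / n)..(Real.pi * ((i+1:ℕ):ℝ) / n), LL t := hadj.symm
  _ ≤ ∑ i ∈ Finset.range J, Real.pi / n * LL (Real.pi * ((1+i:ℕ):ℝ) / n) :=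
        Finset.sum_le_sum hterm
  _ = Real.pi / n * ∑ i ∈ Finset.range J, LL (Real.pi * ((1+i:ℕ):ℝ) / n) :=
        (Finset.mul_sum _ _ _).symm

lemma ineq_upper_inc (hn : 1 ≤ n) (J : ℕ) (hJ2 : 2*J ≤ n) :
    Real.pi / n * ∑ j ∈ Finset.Ico 1 (J+1), LL (Real.pi * j / n) ≤
      II (Real.pi * (J:ℝ) / n) - II (Real.pi * (1:ℝ) / n) + Real.pi / n * Real.log 2 := by
  have hn0 : (0:ℝ) < n := by exact_mod_cast hn
  have hpin : 0 ≤ Real.pi / n := by positivity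
  have h1n : ((1:ℕ):ℝ) ≤ n := by exact_mod_cast hn
  have hII1 : II (Real.pi * (1:ℝ) / n) ≤ Real.pi / n * Real.log 2 := by
    have hc := cell_le (aux_nonneg (n := n) 1)
      (LL_int le_rfl Real.pi_pos.le (aux_nonneg 1) (aux_le_pi hn h1n))
      (fun t _ => LL_le t)
    unfold II
    have : (Real.pi * ((1:ℕ):ℝ) / n - 0) = Real.pi / n := by push_cast; ring
    rw [this] at hc
    simpa using hc
  rcases Nat.eq_zero_or_pos J with hJ0 | hJ0
  · subst hJ0
    simp only [Nat.cast_zero, mul_zero, zero_div, II_zero]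
    rw [show (0:ℕ)+1 = 1 from rfl, Finset.Ico_self, Finset.sum_empty, mul_zero]
    linarith
  · rw [Finset.sum_Ico_succ_top (by omega : 1 ≤ J), Finset.sum_Ico_eq_sum_range]
    have hadj := sum_adj hn 1 (J-1) (by exact_mod_cast (by omega : 1 + (J-1) ≤ n))
    simp only [show 1 + (J-1) = J from by omega, Nat.cast_one] at hadj
    have hterm : ∀ i ∈ Finset.range (J-1),
        Real.pi / n * LL (Real.pi * ((1+i:ℕ):ℝ) / n)
          ≤ ∫ t in (Real.pi * ((1+i:ℕ):ℝ) / n)..(Real.pi * ((1+i+1:ℕ):ℝ) / n), LL t := by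
      intro i hi
      rw [Finset.mem_range] at hi
      have hineq := le_cell (aux_amono (n := n) (by omega : 1+i ≤ 1+i+1))
        (aux_int hn (by exact_mod_cast (by omega : 1+i ≤ n))
          (by exact_mod_cast (by omega : 1+i+1 ≤ n)))
        (fun t ht => LL_mono (aux_pos hn (by omega)) ht.1.le
          (le_trans ht.2 (aux_half (by omega : 2*(1+i+1) ≤ n))))
      rwa [show (1+i+1) = ((1+i)+1) from rfl, aux_step] at hineq
    have hsum : Real.pi / n * ∑ i ∈ Finset.range (J-1), LL (Real.pi * ((1+i:ℕ):ℝ) / n)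
        ≤ II (Real.pi * (J:ℝ) / n) - II (Real.pi * (1:ℝ) / n) := by
      rw [Finset.mul_sum]
      calc ∑ i ∈ Finset.range (J-1), Real.pi / n * LL (Real.pi * ((1+i:ℕ):ℝ) / n)
          ≤ ∑ i ∈ Finset.range (J-1),
              ∫ t in (Real.pi * ((1+i:ℕ):ℝ) / n)..(Real.pi * ((1+i+1:ℕ):ℝ) / n), LL t :=
            Finset.sum_le_sum hterm
      _ = II (Real.pi * (J:ℝ) / n) - II (Real.pi * (1:ℝ) / n) := hadj
    have hlast : Real.pi / n * LL (Real.pi * (J:ℝ) / n) ≤ Real.pi / n * Real.log 2 :=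
      mul_le_mul_of_nonneg_left (LL_le _) hpin
    rw [mul_add]
    linarith

lemma ineq_lower_dec (hn : 1 ≤ n) (J D : ℕ) (hJD : J ≤ D) (himp : J < D → n ≤ 2*(J+1))
    (hD : ((D+1:ℕ):ℝ) < n) :
    II (Real.pi * ((D+1:ℕ):ℝ) / n) - II (Real.pi * ((J+1:ℕ):ℝ) / n) ≤
      Real.pi / n * ∑ j ∈ Finset.Ico (J+1) (D+1), LL (Real.pi * j / n) := by
  have hDnat : D+1 < n := by exact_mod_cast hD
  rw [Finset.sum_Ico_eq_sum_range]
  simp only [show (D+1) - (J+1) = D - J from by omega]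
  have hadj := sum_adj hn (J+1) (D-J) (by
    rw [show (J+1) + (D-J) = D+1 from by omega]; exact hD.le)
  rw [show (J+1) + (D-J) = D+1 from by omega] at hadj
  have hterm : ∀ i ∈ Finset.range (D-J),
      (∫ t in (Real.pi * ((J+1+i:ℕ):ℝ) / n)..(Real.pi * ((J+1+i+1:ℕ):ℝ) / n), LL t)
        ≤ Real.pi / n * LL (Real.pi * ((J+1+i:ℕ):ℝ) / n) := by
    intro i hi
    rw [Finset.mem_range] at hi
    have hJhalf : n ≤ 2*(J+1) := himp (by omega)
    have hle1 : ((J+1+i:ℕ):ℝ) ≤ n := by exact_mod_cast (by omega : J+1+i ≤ n)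
    have hle2 : ((J+1+i+1:ℕ):ℝ) ≤ n := by exact_mod_cast (by omega : J+1+i+1 ≤ n)
    have hineq := cell_le (aux_amono (n := n) (by omega : J+1+i ≤ J+1+i+1))
      (aux_int hn hle1 hle2)
      (fun t ht => LL_anti (aux_halfge hn (by omega : n ≤ 2*(J+1+i))) ht.1.le
        (lt_of_le_of_lt (le_trans ht.2 (aux_amono (by omega : J+1+i+1 ≤ D+1)))
          (aux_lt_pi hD)))
    rwa [show (J+1+i+1) = ((J+1+i)+1) from rfl, aux_step] at hineq
  calc II (Real.pi * ((D+1:ℕ):ℝ) / n) - II (Real.pi * ((J+1:ℕ):ℝ) / n)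
      = ∑ i ∈ Finset.range (D-J),
          ∫ t in (Real.pi * ((J+1+i:ℕ):ℝ) / n)..(Real.pi * ((J+1+i+1:ℕ):ℝ) / n), LL t :=
        hadj.symm
  _ ≤ ∑ i ∈ Finset.range (D-J), Real.pi / n * LL (Real.pi * ((J+1+i:ℕ):ℝ) / n) :=
        Finset.sum_le_sum hterm
  _ = Real.pi / n * ∑ i ∈ Finset.range (D-J), LL (Real.pi * ((J+1+i:ℕ):ℝ) / n) :=
        (Finset.mul_sum _ _ _).symm

lemma ineq_upper_dec (hn : 1 ≤ n) (J D : ℕ) (hJD : J ≤ D) (himp : J < D → n ≤ 2*(J+1))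
    (hD : ((D+1:ℕ):ℝ) < n) :
    Real.pi / n * ∑ j ∈ Finset.Ico (J+1) (D+1), LL (Real.pi * j / n) ≤
      Real.pi / n * Real.log 2 + II (Real.pi * (D:ℝ) / n) - II (Real.pi * ((J+1:ℕ):ℝ) / n) := by
  have hn0 : (0:ℝ) < n := by exact_mod_cast hn
  have hpin : 0 ≤ Real.pi / n := by positivity
  have hDnat : D+1 < n := by exact_mod_cast hD
  have hDn : (D:ℝ) ≤ n := by exact_mod_cast (by omega : D ≤ n)
  rcases eq_or_lt_of_le hJD with hEq | hlt
  · subst hEq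
    rw [Finset.Ico_self, Finset.sum_empty, mul_zero]
    have hc := cell_le (aux_amono (n := n) (Nat.le_succ J))
      (aux_int hn hDn hD.le) (fun t _ => LL_le t)
    rw [aux_step] at hc
    have hsplit := intervalIntegral.integral_add_adjacent_intervals
      (LL_int le_rfl Real.pi_pos.le (aux_nonneg (n:=n) J) (aux_le_pi hn hDn))
      (aux_int hn hDn hD.le)
    unfold II at *
    linarith
  · have hJhalf : n ≤ 2*(J+1) := himp hlt
    rw [Finset.sum_eq_sum_Ico_succ_bot (by omega : J+1 < D+1), Finset.sum_Ico_eq_sum_range]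
    simp only [show (D+1) - (J+1+1) = D - (J+1) from by omega,
      show ∀ i : ℕ, J+1+1+i = J+1+i+1 from fun i => by omega]
    have hadj := sum_adj hn (J+1) (D-(J+1)) (by
      rw [show (J+1) + (D-(J+1)) = D from by omega]; exact hDn)
    rw [show (J+1) + (D-(J+1)) = D from by omega] at hadj
    have hterm : ∀ i ∈ Finset.range (D-(J+1)),
        Real.pi / n * LL (Real.pi * ((J+1+i+1:ℕ):ℝ) / n)
          ≤ ∫ t in (Real.pi * ((J+1+i:ℕ):ℝ) / n)..(Real.pi * ((J+1+i+1:ℕ):ℝ) / n), LL t := by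
      intro i hi
      rw [Finset.mem_range] at hi
      have hle1 : ((J+1+i:ℕ):ℝ) ≤ n := by exact_mod_cast (by omega : J+1+i ≤ n)
      have hle2 : ((J+1+i+1:ℕ):ℝ) ≤ n := by exact_mod_cast (by omega : J+1+i+1 ≤ n)
      have hineq := le_cell (aux_amono (n := n) (by omega : J+1+i ≤ J+1+i+1))
        (aux_int hn hle1 hle2)
        (fun t ht => LL_anti (le_trans (aux_halfge hn (by omega : n ≤ 2*(J+1+i))) ht.1.le)
          ht.2 (lt_of_le_of_lt (aux_amono (by omega : J+1+i+1 ≤ D+1)) (aux_lt_pi hD)))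
      rwa [show (J+1+i+1) = ((J+1+i)+1) from rfl, aux_step] at hineq
    have hsum : Real.pi / n * ∑ i ∈ Finset.range (D-(J+1)), LL (Real.pi * ((J+1+i+1:ℕ):ℝ) / n)
        ≤ II (Real.pi * (D:ℝ) / n) - II (Real.pi * ((J+1:ℕ):ℝ) / n) := by
      rw [Finset.mul_sum]
      calc ∑ i ∈ Finset.range (D-(J+1)), Real.pi / n * LL (Real.pi * ((J+1+i+1:ℕ):ℝ) / n)
          ≤ ∑ i ∈ Finset.range (D-(J+1)),
              ∫ t in (Real.pi * ((J+1+i:ℕ):ℝ) / n)..(Real.pi * ((J+1+i+1:ℕ):ℝ) / n), LL t :=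
            Finset.sum_le_sum hterm
      _ = II (Real.pi * (D:ℝ) / n) - II (Real.pi * ((J+1:ℕ):ℝ) / n) := hadj
    have hfirst : Real.pi / n * LL (Real.pi * ((J+1:ℕ):ℝ) / n) ≤ Real.pi / n * Real.log 2 :=
      mul_le_mul_of_nonneg_left (LL_le _) hpin
    rw [mul_add]
    linarith
end aux

lemma tendsto_half : Tendsto (fun n : ℕ => ((n/2 : ℕ):ℝ)/(n:ℝ)) atTop (nhds (1/2)) := by
  apply tendsto_of_tendsto_of_tendsto_of_le_of_le' (g := fun n : ℕ => 1/2 - 1/(n:ℝ))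
    (h := fun _ : ℕ => (1:ℝ)/2)
  · have := tendsto_const_nhds (x := (1:ℝ)/2) (f := atTop (α := ℕ)) |>.sub
      tendsto_one_div_atTop_nhds_zero_nat
    simpa using this
  · exact tendsto_const_nhds
  · filter_upwards [eventually_ge_atTop 1] with n hn
    have h0 : (0:ℝ) < n := by exact_mod_cast hn
    have h2 : (n:ℝ) ≤ 2 * ((n/2:ℕ):ℝ) + 1 := by exact_mod_cast (by omega : n ≤ 2*(n/2) + 1)
    rw [le_div_iff₀ h0]
    have hexp : (1/2 - 1/(n:ℝ)) * n = n/2 - 1 := by field_simp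
    rw [hexp]
    linarith
  · filter_upwards [eventually_ge_atTop 1] with n hn
    have h0 : (0:ℝ) < n := by exact_mod_cast hn
    have h2 : ((n/2:ℕ):ℝ) ≤ (n:ℝ)/2 := Nat.cast_div_le
    rw [div_le_iff₀ h0]
    nlinarith

lemma core {τ : ℝ} (hτ0 : 0 < τ) (hτ1 : τ < 1) {d : ℕ → ℕ}
    (hd : Tendsto (fun n : ℕ => (d n : ℝ) / n) atTop (nhds τ)) :
    Tendsto (fun n : ℕ => Real.pi / n * ∑ j ∈ Finset.Icc 1 (d n), LL (Real.pi * j / n))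
      atTop (nhds (II (Real.pi * τ))) := by
  have hm0 : 0 < min τ (1/2) := lt_min hτ0 (by norm_num)
  have hmhalf : min τ (1/2) ≤ 1/2 := min_le_right _ _
  have hmτ : min τ (1/2) ≤ τ := min_le_left _ _
  have hshift : ∀ (u : ℕ → ℕ) {c : ℝ}, Tendsto (fun k : ℕ => ((u k : ℕ):ℝ)/k) atTop (nhds c) →
      Tendsto (fun k : ℕ => (((u k)+1 : ℕ):ℝ)/k) atTop (nhds c) := by
    intro u c hu
    have h := hu.add tendsto_one_div_atTop_nhds_zero_nat
    rw [add_zero] at h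
    refine h.congr fun k => ?_
    push_cast
    rw [← add_div]
  have hJn : Tendsto (fun n : ℕ => ((min (d n) (n/2) : ℕ):ℝ)/n) atTop (nhds (min τ (1/2))) := by
    refine (hd.min tendsto_half).congr fun n => ?_
    rw [Nat.cast_min]
    exact min_div_div_right (Nat.cast_nonneg n) _ _
  have hevD : ∀ᶠ n : ℕ in atTop, ((d n + 1 : ℕ):ℝ) < n := by
    filter_upwards [(hshift d hd).eventually_lt_const hτ1, eventually_ge_atTop 1] with n h hn
    have h0 : (0:ℝ) < n := by exact_mod_cast hn
    rwa [div_lt_one h0] at h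
  have hIIcomp : ∀ (u : ℕ → ℕ) {c : ℝ}, 0 ≤ c → c ≤ 1 →
      Tendsto (fun k : ℕ => ((u k : ℕ):ℝ)/k) atTop (nhds c) →
      (∀ᶠ k : ℕ in atTop, 1 ≤ k ∧ ((u k : ℕ):ℝ) ≤ k) →
      Tendsto (fun k : ℕ => II (Real.pi * ((u k : ℕ):ℝ)/k)) atTop
        (nhds (II (Real.pi * c))) := by
    intro u c hc0 hc1 hu hmem
    refine tendsto_II ⟨by positivity, by nlinarith [Real.pi_pos]⟩ ?_ ?_
    · refine (hu.const_mul Real.pi).congr fun k => ?_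
      rw [mul_div_assoc]
    · filter_upwards [hmem] with k hk
      exact aux_mem_s3 hk.1 hk.2
  have T1 : Tendsto (fun n : ℕ => II (Real.pi * ((min (d n) (n/2) : ℕ):ℝ)/n)) atTop
      (nhds (II (Real.pi * min τ (1/2)))) := by
    refine hIIcomp _ hm0.le (by linarith) hJn ?_
    filter_upwards [eventually_ge_atTop 1] with n hn
    exact ⟨hn, by exact_mod_cast (by omega : min (d n) (n/2) ≤ n)⟩
  have T2 : Tendsto (fun n : ℕ => II (Real.pi * ((d n + 1 : ℕ):ℝ)/n)) atTop
      (nhds (II (Real.pi * τ))) := by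
    refine hIIcomp _ hτ0.le hτ1.le (hshift d hd) ?_
    filter_upwards [hevD, eventually_ge_atTop 1] with n h hn
    exact ⟨hn, h.le⟩
  have T3 : Tendsto (fun n : ℕ => II (Real.pi * ((min (d n) (n/2) + 1 : ℕ):ℝ)/n)) atTop
      (nhds (II (Real.pi * min τ (1/2)))) := by
    refine hIIcomp _ hm0.le (by linarith) (hshift _ hJn) ?_
    filter_upwards [eventually_ge_atTop 2] with n hn
    exact ⟨by omega, by exact_mod_cast (by omega : min (d n) (n/2) + 1 ≤ n)⟩
  have T4 : Tendsto (fun n : ℕ => II (Real.pi * ((d n : ℕ):ℝ)/n)) atTop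
      (nhds (II (Real.pi * τ))) := by
    refine hIIcomp _ hτ0.le hτ1.le hd ?_
    filter_upwards [hevD, eventually_ge_atTop 1] with n h hn
    refine ⟨hn, ?_⟩
    have : ((d n : ℕ):ℝ) ≤ ((d n + 1 : ℕ):ℝ) := by exact_mod_cast (by omega : d n ≤ d n + 1)
    linarith
  have T5 : Tendsto (fun n : ℕ => II (Real.pi * (1:ℝ)/n)) atTop (nhds 0) := by
    have h := hIIcomp (fun _ => 1) le_rfl zero_le_one
      (by simpa [one_div] using tendsto_one_div_atTop_nhds_zero_nat (𝕜 := ℝ))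
      (by filter_upwards [eventually_ge_atTop 1] with n hn
          exact ⟨hn, by exact_mod_cast hn⟩)
    simpa [II_zero] using h
  have T6 : Tendsto (fun n : ℕ => Real.pi / (n:ℝ) * Real.log 2) atTop (nhds 0) := by
    have h := (tendsto_one_div_atTop_nhds_zero_nat.const_mul Real.pi).mul_const (Real.log 2)
    simp only [mul_zero, zero_mul] at h
    refine h.congr fun n => ?_
    rw [mul_one_div]
  apply tendsto_of_tendsto_of_tendsto_of_le_of_le'
    (g := fun n : ℕ => II (Real.pi * ((min (d n) (n/2) : ℕ):ℝ)/n)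
      + (II (Real.pi * ((d n + 1 : ℕ):ℝ)/n) - II (Real.pi * ((min (d n) (n/2) + 1 : ℕ):ℝ)/n)))
    (h := fun n : ℕ => (II (Real.pi * ((min (d n) (n/2) : ℕ):ℝ)/n) - II (Real.pi * (1:ℝ)/n)
        + Real.pi / n * Real.log 2)
      + (Real.pi / n * Real.log 2 + II (Real.pi * ((d n : ℕ):ℝ)/n)
        - II (Real.pi * ((min (d n) (n/2) + 1 : ℕ):ℝ)/n)))
  · rw [show II (Real.pi * τ) = II (Real.pi * min τ (1/2))
      + (II (Real.pi * τ) - II (Real.pi * min τ (1/2))) from by ring]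
    exact T1.add (T2.sub T3)
  · rw [show II (Real.pi * τ) = (II (Real.pi * min τ (1/2)) - 0 + 0)
      + (0 + II (Real.pi * τ) - II (Real.pi * min τ (1/2))) from by ring]
    exact ((T1.sub T5).add T6).add ((T6.add T4).sub T3)
  · filter_upwards [hevD, eventually_ge_atTop 2] with n hD hn2
    have hn1 : 1 ≤ n := by omega
    have hJ2 : 2 * min (d n) (n/2) ≤ n := by omega
    have hJD : min (d n) (n/2) ≤ d n := min_le_left _ _
    have himp : min (d n) (n/2) < d n → n ≤ 2*(min (d n) (n/2) + 1) := by omega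
    have hsplit : ∑ j ∈ Finset.Icc 1 (d n), LL (Real.pi * j / n)
        = (∑ j ∈ Finset.Ico 1 (min (d n) (n/2) + 1), LL (Real.pi * j / n))
          + ∑ j ∈ Finset.Ico (min (d n) (n/2) + 1) (d n + 1), LL (Real.pi * j / n) := by
      rw [← Finset.Ico_add_one_right_eq_Icc]
      exact (Finset.sum_Ico_consecutive _ (by omega) (by omega)).symm
    rw [hsplit, mul_add]
    have h1 := ineq_lower_inc hn1 (min (d n) (n/2)) hJ2
    have h2 := ineq_lower_dec hn1 (min (d n) (n/2)) (d n) hJD himp hD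
    linarith
  · filter_upwards [hevD, eventually_ge_atTop 2] with n hD hn2
    have hn1 : 1 ≤ n := by omega
    have hJ2 : 2 * min (d n) (n/2) ≤ n := by omega
    have hJD : min (d n) (n/2) ≤ d n := min_le_left _ _
    have himp : min (d n) (n/2) < d n → n ≤ 2*(min (d n) (n/2) + 1) := by omega
    have hsplit : ∑ j ∈ Finset.Icc 1 (d n), LL (Real.pi * j / n)
        = (∑ j ∈ Finset.Ico 1 (min (d n) (n/2) + 1), LL (Real.pi * j / n))
          + ∑ j ∈ Finset.Ico (min (d n) (n/2) + 1) (d n + 1), LL (Real.pi * j / n) := by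
      rw [← Finset.Ico_add_one_right_eq_Icc]
      exact (Finset.sum_Ico_consecutive _ (by omega) (by omega)).symm
    rw [hsplit, mul_add]
    have h1 := ineq_upper_inc hn1 (min (d n) (n/2)) hJ2
    have h2 := ineq_upper_dec hn1 (min (d n) (n/2)) (d n) hJD himp hD
    linarith


lemma lob_eq (x : ℝ) : lob x = - II x := rfl

lemma bigsum_decomp {n s : ℕ} (hn : 2 ≤ n) (hs : n ≤ s) :
    ∑ j ∈ Finset.Icc 1 (s+1) \ {n}, LL (Real.pi * j / n)
      = (∑ j ∈ Finset.Icc 1 (n/2), LL (Real.pi * j / n))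
        + (∑ j ∈ Finset.Icc 1 (n-1-n/2), LL (Real.pi * j / n))
        + ∑ j ∈ Finset.Icc 1 (s+1-n), LL (Real.pi * j / n) := by
  have hn0 : (0:ℝ) < n := by exact_mod_cast (by omega : 0 < n)
  have hset : Finset.Icc 1 (s+1) \ {n} = Finset.Icc 1 (n-1) ∪ Finset.Icc (n+1) (s+1) := by
    ext j
    simp only [Finset.mem_sdiff, Finset.mem_Icc, Finset.mem_union, Finset.mem_singleton]
    omega
  rw [hset, Finset.sum_union (by
    rw [Finset.disjoint_left]
    intro j hj1 hj2
    simp only [Finset.mem_Icc] at hj1 hj2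
    omega)]
  have hmid : Finset.Icc 1 (n-1) = Finset.Icc 1 (n/2) ∪ Finset.Icc (n/2+1) (n-1) := by
    ext j
    simp only [Finset.mem_Icc, Finset.mem_union]
    omega
  rw [hmid, Finset.sum_union (by
    rw [Finset.disjoint_left]
    intro j hj1 hj2
    simp only [Finset.mem_Icc] at hj1 hj2
    omega)]
  congr 1
  · congr 1
    -- reflection part
    have e1 : Finset.Icc (n/2+1) (n-1) = Finset.Ico (n/2+1) n := by
      rw [← Finset.Ico_add_one_right_eq_Icc]
      congr 1
      omega
    have e2 : Finset.Icc 1 (n-1-n/2) = Finset.Ico 1 (n-n/2) := by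
      rw [← Finset.Ico_add_one_right_eq_Icc]
      congr 1
      omega
    rw [e1, e2, Finset.sum_Ico_eq_sum_range, Finset.sum_Ico_eq_sum_range]
    simp only [show n - (n/2+1) = n-n/2-1 from by omega, show (n-n/2) - 1 = n-n/2-1 from rfl]
    rw [← Finset.sum_range_reflect (fun i => LL (Real.pi * ((n/2+1+i:ℕ):ℝ) / n)) (n-n/2-1)]
    apply Finset.sum_congr rfl
    intro i hi
    rw [Finset.mem_range] at hi
    rw [show n/2+1+(n-n/2-1-1-i) = n-1-i from by omega]
    have hcast : ((n-1-i:ℕ):ℝ) = (n:ℝ) - 1 - i := by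
      rw [Nat.cast_sub (by omega : i ≤ n-1), Nat.cast_sub (by omega : 1 ≤ n)]
      push_cast
      ring
    rw [hcast, show Real.pi * ((n:ℝ) - 1 - i) / n = Real.pi - Real.pi * ((1+i:ℕ):ℝ)/n from by
      push_cast
      field_simp
      ring, LL_refl]
  · -- shift part
    have e1 : Finset.Icc (n+1) (s+1) = Finset.Ico (n+1) (s+2) := by
      rw [← Finset.Ico_add_one_right_eq_Icc]
      rfl
    have e2 : Finset.Icc 1 (s+1-n) = Finset.Ico 1 (s+2-n) := by
      rw [← Finset.Ico_add_one_right_eq_Icc]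
      congr 1
      omega
    rw [e1, e2, Finset.sum_Ico_eq_sum_range, Finset.sum_Ico_eq_sum_range]
    simp only [show (s+2) - (n+1) = s+1-n from by omega, show (s+2-n) - 1 = s+1-n from by omega]
    apply Finset.sum_congr rfl
    intro i _
    rw [show Real.pi * ((n+1+i:ℕ):ℝ)/n = Real.pi * ((1+i:ℕ):ℝ)/n + Real.pi from by
      push_cast
      field_simp
      ring, LL_per]

lemma tendsto_refl_count : Tendsto (fun n : ℕ => ((n-1-n/2:ℕ):ℝ)/n) atTop (nhds (1/2)) := by
  have h := ((tendsto_const_nhds (x := (1:ℝ)) (f := atTop (α := ℕ))).sub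
    tendsto_one_div_atTop_nhds_zero_nat).sub tendsto_half
  rw [show (1:ℝ) - 0 - 1/2 = 1/2 from by norm_num] at h
  apply h.congr'
  filter_upwards [eventually_ge_atTop 2] with n hn
  have hn0 : (0:ℝ) < n := by exact_mod_cast (by omega : 0 < n)
  have hcast : ((n-1-n/2:ℕ):ℝ) = (n:ℝ) - 1 - ((n/2:ℕ):ℝ) := by
    rw [Nat.cast_sub (by omega : n/2 ≤ n-1), Nat.cast_sub (by omega : 1 ≤ n)]
    norm_num
  rw [hcast]
  field_simp

lemma II_split {σ : ℝ} (hσ1 : 1 < σ) (hσ2 : σ < 2) :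
    II (Real.pi * σ) = II (Real.pi * (1/2)) + II (Real.pi * (1/2)) + II (Real.pi * (σ-1)) := by
  have hpi := Real.pi_pos
  have hb1 : 0 ≤ Real.pi * (σ-1) := by nlinarith
  have hb2 : Real.pi * (σ-1) ≤ Real.pi := by nlinarith
  have hrefl : (∫ t in (Real.pi/2)..Real.pi, LL t) = ∫ t in (0:ℝ)..(Real.pi/2), LL t := by
    have h := intervalIntegral.integral_comp_sub_left (a := (0:ℝ)) (b := Real.pi/2) LL Real.pi
    simp only [LL_refl, sub_zero, sub_half] at h
    exact h.symm
  have hIpi : (∫ t in (0:ℝ)..Real.pi, LL t)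
      = (∫ t in (0:ℝ)..(Real.pi/2), LL t) + ∫ t in (0:ℝ)..(Real.pi/2), LL t := by
    have h := intervalIntegral.integral_add_adjacent_intervals
      (LL_int (a := 0) (b := Real.pi/2) le_rfl hpi.le (by positivity) (by linarith))
      (LL_int (a := Real.pi/2) (b := Real.pi) (by positivity) (by linarith) hpi.le le_rfl)
    linarith [hrefl]
  have hper : (fun x => LL (x - Real.pi)) = LL := by
    funext x
    have h := LL_per (x - Real.pi)
    rw [sub_add_cancel] at h
    exact h.symm
  have hint2 : IntervalIntegrable LL volume Real.pi (Real.pi * σ) := by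
    have h := (LL_int le_rfl hpi.le hb1 hb2).comp_sub_right Real.pi
    rw [hper, zero_add, show Real.pi * (σ-1) + Real.pi = Real.pi * σ from by ring] at h
    exact h
  have htrans : (∫ t in Real.pi..(Real.pi * σ), LL t)
      = ∫ t in (0:ℝ)..(Real.pi * (σ-1)), LL t := by
    have h := intervalIntegral.integral_comp_add_right (a := (0:ℝ)) (b := Real.pi * (σ-1))
      LL Real.pi
    simp only [LL_per, zero_add] at h
    rw [show Real.pi * (σ-1) + Real.pi = Real.pi * σ from by ring] at h
    exact h.symm
  have hsplit := intervalIntegral.integral_add_adjacent_intervals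
    (LL_int (a := 0) (b := Real.pi) le_rfl hpi.le hpi.le le_rfl) hint2
  have hhalf : Real.pi * (1/2) = Real.pi / 2 := by ring
  unfold II
  rw [hhalf]
  linarith [hsplit, htrans, hIpi]

/-- asymptotics of `[n]·Δ²`. For `τ₁,τ₂,τ₃ ∈ (0,1)` with `1 < τ₁+τ₂+τ₃ < 2` and
sequences of naturals `d_kⁿ` with `d_kⁿ/n → τ_k`, setting `sₙ = d₁ⁿ+d₂ⁿ+d₃ⁿ`,
`(2π/n)(Σ_k Σ_{j=1}^{d_kⁿ} log(2 sin(πj/n)) − Σ_{j=1,j≠n}^{sₙ+1} log|2 sin(πj/n)|)`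
converges to `2(Λ(π(τ₁+τ₂+τ₃)) − Λ(πτ₁) − Λ(πτ₂) − Λ(πτ₃))`. -/
theorem delta_squared_asymptotics (τ₁ τ₂ τ₃ : ℝ)
    (hτ₁ : τ₁ ∈ Set.Ioo (0:ℝ) 1) (hτ₂ : τ₂ ∈ Set.Ioo (0:ℝ) 1) (hτ₃ : τ₃ ∈ Set.Ioo (0:ℝ) 1)
    (hsum₁ : 1 < τ₁ + τ₂ + τ₃) (hsum₂ : τ₁ + τ₂ + τ₃ < 2)
    (d₁ d₂ d₃ : ℕ → ℕ)
    (hd₁ : Tendsto (fun n : ℕ => (d₁ n : ℝ) / n) atTop (nhds τ₁))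
    (hd₂ : Tendsto (fun n : ℕ => (d₂ n : ℝ) / n) atTop (nhds τ₂))
    (hd₃ : Tendsto (fun n : ℕ => (d₃ n : ℝ) / n) atTop (nhds τ₃)) :
    Tendsto (fun n : ℕ =>
        2 * Real.pi / n *
          (((∑ j ∈ Finset.Icc 1 (d₁ n), Real.log (2 * Real.sin (Real.pi * j / n))) +
            (∑ j ∈ Finset.Icc 1 (d₂ n), Real.log (2 * Real.sin (Real.pi * j / n))) +
            (∑ j ∈ Finset.Icc 1 (d₃ n), Real.log (2 * Real.sin (Real.pi * j / n)))) -
            ∑ j ∈ Finset.Icc 1 (d₁ n + d₂ n + d₃ n + 1) \ {n},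
              Real.log |2 * Real.sin (Real.pi * j / n)|))
      atTop
      (nhds (2 * (lob (Real.pi * (τ₁ + τ₂ + τ₃)) -
        lob (Real.pi * τ₁) - lob (Real.pi * τ₂) - lob (Real.pi * τ₃)))) := by
  obtain ⟨hτ₁0, hτ₁1⟩ := hτ₁
  obtain ⟨hτ₂0, hτ₂1⟩ := hτ₂
  obtain ⟨hτ₃0, hτ₃1⟩ := hτ₃
  set σ : ℝ := τ₁ + τ₂ + τ₃ with hσdef
  -- sum sequence
  have hs : Tendsto (fun n : ℕ => ((d₁ n + d₂ n + d₃ n : ℕ):ℝ)/n) atTop (nhds σ) := by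
    refine ((hd₁.add hd₂).add hd₃).congr fun n => ?_
    push_cast
    ring
  have hsge : ∀ᶠ n : ℕ in atTop, n ≤ d₁ n + d₂ n + d₃ n := by
    filter_upwards [hs.eventually_const_lt hsum₁, eventually_ge_atTop 1] with n h hn
    have hn0 : (0:ℝ) < n := by exact_mod_cast hn
    rw [one_lt_div hn0] at h
    exact_mod_cast h.le
  have htend_e : Tendsto (fun n : ℕ => ((d₁ n + d₂ n + d₃ n + 1 - n : ℕ):ℝ)/n) atTop
      (nhds (σ - 1)) := by
    have h := (hs.add tendsto_one_div_atTop_nhds_zero_nat).sub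
      (tendsto_const_nhds (x := (1:ℝ)) (f := atTop (α := ℕ)))
    rw [add_zero] at h
    apply h.congr'
    filter_upwards [hsge, eventually_ge_atTop 1] with n hsn hn
    have hn0 : (0:ℝ) < n := by exact_mod_cast hn
    rw [Nat.cast_sub (by omega : n ≤ d₁ n + d₂ n + d₃ n + 1)]
    push_cast
    field_simp
  -- limits of the six pieces
  have C1 := core hτ₁0 hτ₁1 hd₁
  have C2 := core hτ₂0 hτ₂1 hd₂
  have C3 := core hτ₃0 hτ₃1 hd₃
  have H1 := core (by norm_num : (0:ℝ) < 1/2) (by norm_num) tendsto_half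
  have H2 := core (by norm_num : (0:ℝ) < 1/2) (by norm_num) tendsto_refl_count
  have H3 := core (by linarith : (0:ℝ) < σ - 1) (by linarith) htend_e
  have hG : Tendsto (fun n : ℕ =>
      2 * ((Real.pi / n * ∑ j ∈ Finset.Icc 1 (d₁ n), LL (Real.pi * j / n))
        + (Real.pi / n * ∑ j ∈ Finset.Icc 1 (d₂ n), LL (Real.pi * j / n))
        + (Real.pi / n * ∑ j ∈ Finset.Icc 1 (d₃ n), LL (Real.pi * j / n))
        - ((Real.pi / n * ∑ j ∈ Finset.Icc 1 (n/2), LL (Real.pi * j / n))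
          + (Real.pi / n * ∑ j ∈ Finset.Icc 1 (n-1-n/2), LL (Real.pi * j / n))
          + (Real.pi / n * ∑ j ∈ Finset.Icc 1 (d₁ n + d₂ n + d₃ n + 1 - n),
              LL (Real.pi * j / n)))))
      atTop (nhds (2 * (II (Real.pi * τ₁) + II (Real.pi * τ₂) + II (Real.pi * τ₃)
        - (II (Real.pi * (1/2)) + II (Real.pi * (1/2)) + II (Real.pi * (σ-1)))))) :=
    (((C1.add C2).add C3).sub ((H1.add H2).add H3)).const_mul 2
  -- identify limit value
  have hval : 2 * (II (Real.pi * τ₁) + II (Real.pi * τ₂) + II (Real.pi * τ₃)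
      - (II (Real.pi * (1/2)) + II (Real.pi * (1/2)) + II (Real.pi * (σ-1))))
      = 2 * (lob (Real.pi * σ) - lob (Real.pi * τ₁) - lob (Real.pi * τ₂) - lob (Real.pi * τ₃)) := by
    simp only [lob_eq]
    have h := II_split hsum₁ hsum₂
    linarith
  rw [← hval]
  apply hG.congr'
  have hlt1 : ∀ᶠ n : ℕ in atTop, d₁ n < n := by
    filter_upwards [hd₁.eventually_lt_const hτ₁1, eventually_ge_atTop 1] with n h hn
    have hn0 : (0:ℝ) < n := by exact_mod_cast hn
    rw [div_lt_one hn0] at h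
    exact_mod_cast h
  have hlt2 : ∀ᶠ n : ℕ in atTop, d₂ n < n := by
    filter_upwards [hd₂.eventually_lt_const hτ₂1, eventually_ge_atTop 1] with n h hn
    have hn0 : (0:ℝ) < n := by exact_mod_cast hn
    rw [div_lt_one hn0] at h
    exact_mod_cast h
  have hlt3 : ∀ᶠ n : ℕ in atTop, d₃ n < n := by
    filter_upwards [hd₃.eventually_lt_const hτ₃1, eventually_ge_atTop 1] with n h hn
    have hn0 : (0:ℝ) < n := by exact_mod_cast hn
    rw [div_lt_one hn0] at h
    exact_mod_cast h
  filter_upwards [hlt1, hlt2, hlt3, hsge, eventually_ge_atTop 2] with n h1 h2 h3 hsn hn2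
  have hn1 : 1 ≤ n := by omega
  have e1 : ∑ j ∈ Finset.Icc 1 (d₁ n), Real.log (2 * Real.sin (Real.pi * j / n))
      = ∑ j ∈ Finset.Icc 1 (d₁ n), LL (Real.pi * j / n) := by
    refine Finset.sum_congr rfl fun j hj => ?_
    rw [Finset.mem_Icc] at hj
    exact (LL_eq_of_pos (aux_pos hn1 hj.1)
      (aux_lt_pi (by exact_mod_cast (by omega : j < n)))).symm
  have e2 : ∑ j ∈ Finset.Icc 1 (d₂ n), Real.log (2 * Real.sin (Real.pi * j / n))
      = ∑ j ∈ Finset.Icc 1 (d₂ n), LL (Real.pi * j / n) := by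
    refine Finset.sum_congr rfl fun j hj => ?_
    rw [Finset.mem_Icc] at hj
    exact (LL_eq_of_pos (aux_pos hn1 hj.1)
      (aux_lt_pi (by exact_mod_cast (by omega : j < n)))).symm
  have e3 : ∑ j ∈ Finset.Icc 1 (d₃ n), Real.log (2 * Real.sin (Real.pi * j / n))
      = ∑ j ∈ Finset.Icc 1 (d₃ n), LL (Real.pi * j / n) := by
    refine Finset.sum_congr rfl fun j hj => ?_
    rw [Finset.mem_Icc] at hj
    exact (LL_eq_of_pos (aux_pos hn1 hj.1)
      (aux_lt_pi (by exact_mod_cast (by omega : j < n)))).symm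
  have e4 : ∑ j ∈ Finset.Icc 1 (d₁ n + d₂ n + d₃ n + 1) \ {n},
        Real.log |2 * Real.sin (Real.pi * j / n)|
      = (∑ j ∈ Finset.Icc 1 (n/2), LL (Real.pi * j / n))
        + (∑ j ∈ Finset.Icc 1 (n-1-n/2), LL (Real.pi * j / n))
        + ∑ j ∈ Finset.Icc 1 (d₁ n + d₂ n + d₃ n + 1 - n), LL (Real.pi * j / n) := by
    have h := bigsum_decomp hn2 hsn
    exact h
  rw [e1, e2, e3, e4]
  ring
end

section
/- Fix reals T₀, T₁, T₂, T₃ ∈ (π, 2π) and Q₁, Q₂, Q₃ with 0 < Q_k − T_a < π for all a ∈ {0,1,2,3} and k ∈ {1,2,3}. Set T = max_a T_a, M = min(2π, Q₁, Q₂, Q₃), g(x) = (sin(2π−x)·sin(Q₁−x)·sin(Q₂−x)·sin(Q₃−x)) / (sin(x−T₀)·sin(x−T₁)·sin(x−T₂)·sin(x−T₃)), and F(x) = 2·(Λ(2π−x) + Λ(Q₁−x) + Λ(Q₂−x) + Λ(Q₃−x) + Λ(x−T₀) + Λ(x−T₁) + Λ(x−T₂) + Λ(x−T₃)). Let z₀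 be the unique point of (T, M) with g(z₀) = 1. Then F attains its maximum over [T, M] at z₀ and at no other point: F(x) < F(z₀) for every x ∈ [T, M] with x ≠ z₀. -/
set_option maxHeartbeats 1000000

open Real Filter Finset

/-- The function `g(x) = (sin(2π−x) sin(Q₁−x) sin(Q₂−x) sin(Q₃−x)) /
(sin(x−T₀) sin(x−T₁) sin(x−T₂) sin(x−T₃))` (here `Q 0, Q 1, Q 2` play the roles of
`Q₁, Q₂, Q₃`). -/
noncomputable def gfun (T : Fin 4 → ℝ) (Q : Fin 3 → ℝ) (x : ℝ) : ℝ :=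
  (Real.sin (2 * Real.pi - x) * Real.sin (Q 0 - x) * Real.sin (Q 1 - x) *
      Real.sin (Q 2 - x)) /
    (Real.sin (x - T 0) * Real.sin (x - T 1) * Real.sin (x - T 2) * Real.sin (x - T 3))

/-- `T = max_a T_a`. -/
noncomputable def Tmax (T : Fin 4 → ℝ) : ℝ := max (max (T 0) (T 1)) (max (T 2) (T 3))

/-- `M = min(2π, Q₁, Q₂, Q₃)`. -/
noncomputable def Mmin (Q : Fin 3 → ℝ) : ℝ := min (2 * Real.pi) (min (Q 0) (min (Q 1) (Q 2)))

/-- `F(x) = 2(Λ(2π−x) + Λ(Q₁−x) + Λ(Q₂−x) + Λ(Q₃−x) + Λ(x−T₀) + Λ(x−T₁) + Λ(x−T₂) + Λ(x−T₃))`. -/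
noncomputable def Ffun (T : Fin 4 → ℝ) (Q : Fin 3 → ℝ) (x : ℝ) : ℝ :=
  2 * (lob (2 * Real.pi - x) + lob (Q 0 - x) + lob (Q 1 - x) + lob (Q 2 - x) +
    lob (x - T 0) + lob (x - T 1) + lob (x - T 2) + lob (x - T 3))

section helpers
open MeasureTheory intervalIntegral Set

lemma integrableOn_log_Ioc' {c : ℝ} (hc : 0 < c) :
    IntegrableOn Real.log (Set.Ioc 0 c) volume := by
  have key : IntegrableOn (fun x => Real.log c - Real.log x) (Set.Ioc 0 c) volume := by
    apply integrableOn_deriv_of_nonneg (g := fun x => x * (1 + Real.log c) - x * Real.log x)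
    · exact ((continuous_id.mul continuous_const).sub Real.continuous_mul_log).continuousOn
    · intro x hx
      have hx0 : x ≠ 0 := ne_of_gt hx.1
      have h1 : HasDerivAt (fun x : ℝ => x * (1 + Real.log c)) (1 + Real.log c) x := by
        simpa using (hasDerivAt_id x).mul_const (1 + Real.log c)
      have h2 := Real.hasDerivAt_mul_log hx0
      exact (h1.sub h2).congr_deriv (by ring)
    · intro x hx
      have : Real.log x ≤ Real.log c := Real.log_le_log hx.1 hx.2.le
      linarith
  have : Real.log = fun x => Real.log c - (Real.log c - Real.log x) := by
    ext x; ring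
  rw [this]
  exact (integrableOn_const measure_Ioc_lt_top.ne).sub key

lemma intervalIntegrable_log_two_sin {b : ℝ} (hb0 : 0 ≤ b) (hbπ : b < π) :
    IntervalIntegrable (fun t => Real.log |2 * Real.sin t|) volume 0 b := by
  rcases eq_or_lt_of_le hb0 with rfl | hb
  · simp
  rw [intervalIntegrable_iff_integrableOn_Ioc_of_le hb0]
  have hsb : 0 < Real.sin b := Real.sin_pos_of_pos_of_lt_pi hb hbπ
  set K : ℝ := Real.log 2 + |Real.log (Real.sin b / b)| with hK
  have hdom : IntegrableOn (fun t => |Real.log t| + K) (Set.Ioc 0 b) volume := by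
    apply Integrable.add _ (integrableOn_const measure_Ioc_lt_top.ne)
    exact (integrableOn_log_Ioc' hb).abs
  apply Integrable.mono hdom
  · exact ((Real.measurable_log.comp
      ((measurable_const.mul Real.measurable_sin).abs)).aestronglyMeasurable)
  · rw [ae_restrict_iff' measurableSet_Ioc]
    refine Filter.Eventually.of_forall (fun t ht => ?_)
    have ht0 : 0 < t := ht.1
    have htb : t ≤ b := ht.2
    have hst : 0 < Real.sin t := Real.sin_pos_of_pos_of_lt_pi ht0 (lt_of_le_of_lt htb hbπ)
    have hub : Real.sin t ≤ t := (Real.sin_lt ht0).le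
    have hlb : (Real.sin b / b) * t ≤ Real.sin t := by
      have ha1 : (0:ℝ) ≤ 1 - t / b := by
        rw [sub_nonneg]; exact div_le_one_of_le₀ htb hb0
      have ha2 : (0:ℝ) ≤ t / b := by positivity
      have ha3 : (1 - t / b) + t / b = 1 := by ring
      have hcc := strictConcaveOn_sin_Icc.concaveOn.2 (x := (0:ℝ)) (y := b)
        ⟨le_rfl, Real.pi_pos.le⟩ ⟨hb0, hbπ.le⟩ ha1 ha2 ha3
      simp only [smul_eq_mul, Real.sin_zero, mul_zero, zero_add] at hcc
      have htt : t / b * b = t := div_mul_cancel₀ t (ne_of_gt hb)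
      rw [htt] at hcc
      calc Real.sin b / b * t = t / b * Real.sin b := by ring
        _ ≤ Real.sin t := hcc
    have habs : |2 * Real.sin t| = 2 * Real.sin t := abs_of_pos (by positivity)
    rw [Real.norm_eq_abs, Real.norm_eq_abs, habs,
      Real.log_mul two_ne_zero (ne_of_gt hst)]
    have hRnn : 0 ≤ |Real.log t| + K := by
      have : (0:ℝ) ≤ Real.log 2 := Real.log_nonneg one_le_two
      have := abs_nonneg (Real.log (Real.sin b / b))
      have := abs_nonneg (Real.log t)
      simp only [hK]; linarith
    rw [abs_of_nonneg hRnn]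
    have hup : Real.log (Real.sin t) ≤ Real.log t := Real.log_le_log hst hub
    have hlo : Real.log (Real.sin b / b) + Real.log t ≤ Real.log (Real.sin t) := by
      rw [← Real.log_mul (by positivity) (ne_of_gt ht0)]
      exact Real.log_le_log (by positivity) hlb
    have h1 : |Real.log (Real.sin t)| ≤ |Real.log t| + |Real.log (Real.sin b / b)| := by
      rw [abs_le]
      constructor
      · have := neg_abs_le (Real.log t)
        have := neg_abs_le (Real.log (Real.sin b / b))
        linarith
      · have := le_abs_self (Real.log t)
        have := abs_nonneg (Real.log (Real.sin b / b))
        linarith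
    calc |Real.log 2 + Real.log (Real.sin t)|
        ≤ |Real.log 2| + |Real.log (Real.sin t)| := abs_add_le _ _
      _ ≤ Real.log 2 + (|Real.log t| + |Real.log (Real.sin b / b)|) := by
          rw [abs_of_nonneg (Real.log_nonneg one_le_two)]; linarith
      _ = |Real.log t| + K := by rw [hK]; ring

lemma lob_continuousOn_Ico : ContinuousOn lob (Set.Ico 0 π) := by
  intro c hc
  set b : ℝ := (c + π) / 2 with hbdef
  have hcb : c < b := by simp only [hbdef]; linarith [hc.2]
  have hbπ : b < π := by simp only [hbdef]; linarith [hc.2]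
  have hb0 : 0 ≤ b := le_trans hc.1 hcb.le
  have hint : IntegrableOn (fun t => Real.log |2 * Real.sin t|) (Set.uIcc 0 b) volume := by
    rw [Set.uIcc_of_le hb0, integrableOn_Icc_iff_integrableOn_Ioc]
    exact (intervalIntegrable_iff_integrableOn_Ioc_of_le hb0).1
      (intervalIntegrable_log_two_sin hb0 hbπ)
  have cont : ContinuousOn lob (Set.Icc 0 b) := by
    have := (intervalIntegral.continuousOn_primitive_interval hint).neg
    rwa [Set.uIcc_of_le hb0] at this
  have hmem : Set.Icc 0 b ∈ nhdsWithin c (Set.Ico 0 π) := by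
    refine Filter.mem_of_superset (inter_mem_nhdsWithin _ (Iio_mem_nhds hcb)) ?_
    rintro x ⟨⟨hx0, -⟩, hxb⟩
    exact ⟨hx0, hxb.le⟩
  exact (cont.continuousWithinAt ⟨hc.1, hcb.le⟩).mono_of_mem_nhdsWithin hmem

lemma lob_hasDerivAt {c : ℝ} (h0 : 0 < c) (hπ : c < π) :
    HasDerivAt lob (-Real.log (2 * Real.sin c)) c := by
  have hsc : 0 < Real.sin c := Real.sin_pos_of_pos_of_lt_pi h0 hπ
  have hmeas : StronglyMeasurableAtFilter (fun t => Real.log |2 * Real.sin t|) (nhds c) volume :=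
    ((Real.measurable_log.comp
      ((measurable_const.mul Real.measurable_sin).abs)).stronglyMeasurable).stronglyMeasurableAtFilter
  have hcont : ContinuousAt (fun t => Real.log |2 * Real.sin t|) c := by
    have h1 : ContinuousAt (fun t => |2 * Real.sin t|) c :=
      ((continuous_const.mul Real.continuous_sin).abs).continuousAt
    exact h1.log (by positivity)
  have d := intervalIntegral.integral_hasDerivAt_right
    (intervalIntegrable_log_two_sin h0.le hπ) hmeas hcont
  have habs : Real.log |2 * Real.sin c| = Real.log (2 * Real.sin c) := by
    rw [abs_of_pos (by positivity : (0:ℝ) < 2 * Real.sin c)]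
  unfold lob
  rw [← habs]
  exact d.neg

lemma lob_comp_sub_left {c x : ℝ} (h0 : 0 < c - x) (hπ : c - x < π) :
    HasDerivAt (fun y => lob (c - y)) (Real.log (2 * Real.sin (c - x))) x := by
  have inner : HasDerivAt (fun y : ℝ => c - y) (-1) x := (hasDerivAt_id x).const_sub c
  have h := (lob_hasDerivAt h0 hπ).comp x inner
  exact h.congr_deriv (by ring)

lemma lob_comp_sub_right {c x : ℝ} (h0 : 0 < x - c) (hπ : x - c < π) :
    HasDerivAt (fun y => lob (y - c)) (-Real.log (2 * Real.sin (x - c))) x := by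
  have inner : HasDerivAt (fun y : ℝ => y - c) 1 x := (hasDerivAt_id x).sub_const c
  have h := (lob_hasDerivAt h0 hπ).comp x inner
  exact h.congr_deriv (by ring)

lemma log_two_sin_left {c x : ℝ} (h : Real.sin (c - x) ≠ 0) :
    HasDerivAt (fun y => Real.log (2 * Real.sin (c - y)))
      (-(Real.cos (c - x) / Real.sin (c - x))) x := by
  have inner : HasDerivAt (fun y : ℝ => c - y) (-1) x := (hasDerivAt_id x).const_sub c
  have hs : HasDerivAt (fun y => 2 * Real.sin (c - y)) (2 * (Real.cos (c - x) * -1)) x :=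
    ((Real.hasDerivAt_sin (c - x)).comp x inner).const_mul 2
  have h2 : (2 : ℝ) * Real.sin (c - x) ≠ 0 := by simp [h]
  have := hs.log h2
  convert this using 1
  field_simp

lemma log_two_sin_right {c x : ℝ} (h : Real.sin (x - c) ≠ 0) :
    HasDerivAt (fun y => Real.log (2 * Real.sin (y - c)))
      (Real.cos (x - c) / Real.sin (x - c)) x := by
  have inner : HasDerivAt (fun y : ℝ => y - c) 1 x := (hasDerivAt_id x).sub_const c
  have hs : HasDerivAt (fun y => 2 * Real.sin (y - c)) (2 * (Real.cos (x - c) * 1)) x :=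
    (HasDerivAt.comp (h₂ := Real.sin) x (Real.hasDerivAt_sin (x - c)) inner).const_mul 2
  have h2 : (2 : ℝ) * Real.sin (x - c) ≠ 0 := by simp [h]
  have := hs.log h2
  convert this using 1
  field_simp

lemma cot_add_pos {u v : ℝ} (hu : 0 < u) (hv : 0 < v) (huv : u + v < π) :
    0 < Real.cos u / Real.sin u + Real.cos v / Real.sin v := by
  have hsu : 0 < Real.sin u := Real.sin_pos_of_pos_of_lt_pi hu (by linarith)
  have hsv : 0 < Real.sin v := Real.sin_pos_of_pos_of_lt_pi hv (by linarith)
  rw [div_add_div _ _ (ne_of_gt hsu) (ne_of_gt hsv)]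
  apply div_pos _ (mul_pos hsu hsv)
  have : Real.cos u * Real.sin v + Real.sin u * Real.cos v = Real.sin (u + v) := by
    rw [Real.sin_add]; ring
  rw [this]
  exact Real.sin_pos_of_pos_of_lt_pi (by linarith) huv

/-- `h(x) = log g(x)`, written as a sum of logs. -/
noncomputable def hfun (T : Fin 4 → ℝ) (Q : Fin 3 → ℝ) (x : ℝ) : ℝ :=
  Real.log (2 * Real.sin (2 * Real.pi - x)) + Real.log (2 * Real.sin (Q 0 - x)) +
  Real.log (2 * Real.sin (Q 1 - x)) + Real.log (2 * Real.sin (Q 2 - x)) -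
  Real.log (2 * Real.sin (x - T 0)) - Real.log (2 * Real.sin (x - T 1)) -
  Real.log (2 * Real.sin (x - T 2)) - Real.log (2 * Real.sin (x - T 3))

end helpers

/-- under the standing hypotheses, if `z₀` is the (unique) point of `(T, M)`
with `g(z₀) = 1`, then `F` attains its maximum over `[T, M]` at `z₀` and at no other point:
`F(x) < F(z₀)` for every `x ∈ [T, M]` with `x ≠ z₀`. -/
theorem Ffun_strict_max_at_critical_point (T : Fin 4 → ℝ) (Q : Fin 3 → ℝ)
    (hT : ∀ a, T a ∈ Set.Ioo Real.pi (2 * Real.pi))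
    (hQT : ∀ (k : Fin 3) (a : Fin 4), Q k - T a ∈ Set.Ioo 0 Real.pi)
    (z₀ : ℝ) (hz₀ : z₀ ∈ Set.Ioo (Tmax T) (Mmin Q)) (hgz₀ : gfun T Q z₀ = 1) :
    ∀ x ∈ Set.Icc (Tmax T) (Mmin Q), x ≠ z₀ → Ffun T Q x < Ffun T Q z₀ := by
  have hTa : ∀ a, T a ≤ Tmax T := by
    intro a; fin_cases a <;> simp [Tmax, le_max_iff]
  have hMk : ∀ k, Mmin Q ≤ Q k := by
    intro k; fin_cases k <;> simp [Mmin, min_le_iff]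
  have hM2π : Mmin Q ≤ 2 * π := min_le_left _ _
  -- strict bounds on the open interval
  have bnds : ∀ x ∈ Set.Ioo (Tmax T) (Mmin Q),
      (0 < 2 * π - x ∧ 2 * π - x < π) ∧ (∀ k, 0 < Q k - x ∧ Q k - x < π) ∧
      (∀ a, 0 < x - T a ∧ x - T a < π) := by
    intro x hx
    obtain ⟨hx1, hx2⟩ := hx
    refine ⟨⟨by linarith, by linarith [(hT 0).1, hTa 0]⟩,
      fun k => ⟨by linarith [hMk k], by linarith [(hQT k 0).2, hTa 0]⟩,
      fun a => ⟨by linarith [hTa a], by linarith [(hQT 0 a).2, hMk 0]⟩⟩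
  -- weak bounds on the closed interval
  have bnd : ∀ x ∈ Set.Icc (Tmax T) (Mmin Q),
      (2 * π - x ∈ Set.Ico (0:ℝ) π) ∧ (∀ k, Q k - x ∈ Set.Ico (0:ℝ) π) ∧
      (∀ a, x - T a ∈ Set.Ico (0:ℝ) π) := by
    intro x hx
    obtain ⟨hx1, hx2⟩ := hx
    refine ⟨⟨by linarith, by linarith [(hT 0).1, hTa 0]⟩,
      fun k => ⟨by linarith [hMk k], by linarith [(hQT k 0).2, hTa 0]⟩,
      fun a => ⟨by linarith [hTa a], by linarith [(hQT 0 a).2, hMk 0]⟩⟩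
  -- continuity of F on the closed interval
  have contF : ContinuousOn (Ffun T Q) (Set.Icc (Tmax T) (Mmin Q)) := by
    have cl : ∀ c : ℝ, (∀ x ∈ Set.Icc (Tmax T) (Mmin Q), c - x ∈ Set.Ico (0:ℝ) π) →
        ContinuousOn (fun x => lob (c - x)) (Set.Icc (Tmax T) (Mmin Q)) := fun c hc =>
      lob_continuousOn_Ico.comp (continuous_const.sub continuous_id).continuousOn hc
    have cr : ∀ c : ℝ, (∀ x ∈ Set.Icc (Tmax T) (Mmin Q), x - c ∈ Set.Ico (0:ℝ) π) →
        ContinuousOn (fun x => lob (x - c)) (Set.Icc (Tmax T) (Mmin Q)) := fun c hc =>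
      lob_continuousOn_Ico.comp (continuous_id.sub continuous_const).continuousOn hc
    unfold Ffun
    exact continuousOn_const.mul
      ((((((((cl _ (fun x hx => (bnd x hx).1)).add
        (cl _ (fun x hx => (bnd x hx).2.1 0))).add
        (cl _ (fun x hx => (bnd x hx).2.1 1))).add
        (cl _ (fun x hx => (bnd x hx).2.1 2))).add
        (cr _ (fun x hx => (bnd x hx).2.2 0))).add
        (cr _ (fun x hx => (bnd x hx).2.2 1))).add
        (cr _ (fun x hx => (bnd x hx).2.2 2))).add
        (cr _ (fun x hx => (bnd x hx).2.2 3)))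
  -- derivative of F
  have dF : ∀ x ∈ Set.Ioo (Tmax T) (Mmin Q),
      HasDerivAt (Ffun T Q) (2 * hfun T Q x) x := by
    intro x hx
    obtain ⟨⟨b1, b1'⟩, b2, b3⟩ := bnds x hx
    have d1 := lob_comp_sub_left b1 b1'
    have d2 := lob_comp_sub_left (b2 0).1 (b2 0).2
    have d3 := lob_comp_sub_left (b2 1).1 (b2 1).2
    have d4 := lob_comp_sub_left (b2 2).1 (b2 2).2
    have d5 := lob_comp_sub_right (b3 0).1 (b3 0).2
    have d6 := lob_comp_sub_right (b3 1).1 (b3 1).2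
    have d7 := lob_comp_sub_right (b3 2).1 (b3 2).2
    have d8 := lob_comp_sub_right (b3 3).1 (b3 3).2
    have h := (((((((d1.add d2).add d3).add d4).add d5).add d6).add d7).add d8).const_mul 2
    have he : HasDerivAt (Ffun T Q)
        (2 * (Real.log (2 * Real.sin (2 * Real.pi - x)) + Real.log (2 * Real.sin (Q 0 - x)) +
          Real.log (2 * Real.sin (Q 1 - x)) + Real.log (2 * Real.sin (Q 2 - x)) +
          -Real.log (2 * Real.sin (x - T 0)) + -Real.log (2 * Real.sin (x - T 1)) +
          -Real.log (2 * Real.sin (x - T 2)) + -Real.log (2 * Real.sin (x - T 3)))) x := h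
    have hval : 2 * hfun T Q x =
        2 * (Real.log (2 * Real.sin (2 * Real.pi - x)) + Real.log (2 * Real.sin (Q 0 - x)) +
          Real.log (2 * Real.sin (Q 1 - x)) + Real.log (2 * Real.sin (Q 2 - x)) +
          -Real.log (2 * Real.sin (x - T 0)) + -Real.log (2 * Real.sin (x - T 1)) +
          -Real.log (2 * Real.sin (x - T 2)) + -Real.log (2 * Real.sin (x - T 3))) := by
      unfold hfun; ring
    rw [hval]
    exact he
  -- derivative of h, with sign
  have dh : ∀ x ∈ Set.Ioo (Tmax T) (Mmin Q),
      ∃ v, HasDerivAt (hfun T Q) v x ∧ v < 0 := by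
    intro x hx
    obtain ⟨⟨b1, b1'⟩, b2, b3⟩ := bnds x hx
    have s1 : Real.sin (2 * π - x) ≠ 0 := ne_of_gt (Real.sin_pos_of_pos_of_lt_pi b1 b1')
    have s2 : Real.sin (Q 0 - x) ≠ 0 := ne_of_gt (Real.sin_pos_of_pos_of_lt_pi (b2 0).1 (b2 0).2)
    have s3 : Real.sin (Q 1 - x) ≠ 0 := ne_of_gt (Real.sin_pos_of_pos_of_lt_pi (b2 1).1 (b2 1).2)
    have s4 : Real.sin (Q 2 - x) ≠ 0 := ne_of_gt (Real.sin_pos_of_pos_of_lt_pi (b2 2).1 (b2 2).2)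
    have s5 : Real.sin (x - T 0) ≠ 0 := ne_of_gt (Real.sin_pos_of_pos_of_lt_pi (b3 0).1 (b3 0).2)
    have s6 : Real.sin (x - T 1) ≠ 0 := ne_of_gt (Real.sin_pos_of_pos_of_lt_pi (b3 1).1 (b3 1).2)
    have s7 : Real.sin (x - T 2) ≠ 0 := ne_of_gt (Real.sin_pos_of_pos_of_lt_pi (b3 2).1 (b3 2).2)
    have s8 : Real.sin (x - T 3) ≠ 0 := ne_of_gt (Real.sin_pos_of_pos_of_lt_pi (b3 3).1 (b3 3).2)
    have e1 := log_two_sin_left s1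
    have e2 := log_two_sin_left s2
    have e3 := log_two_sin_left s3
    have e4 := log_two_sin_left s4
    have f1 := log_two_sin_right s5
    have f2 := log_two_sin_right s6
    have f3 := log_two_sin_right s7
    have f4 := log_two_sin_right s8
    refine ⟨_, (((((((e1.add e2).add e3).add e4).sub f1).sub f2).sub f3).sub f4 :
      HasDerivAt (hfun T Q) _ x), ?_⟩
    have p1 : 0 < Real.cos (2 * π - x) / Real.sin (2 * π - x) +
        Real.cos (x - T 0) / Real.sin (x - T 0) :=
      cot_add_pos b1 (b3 0).1 (by have := (hT 0).1; have := (b3 0).1; linarith)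
    have p2 : 0 < Real.cos (Q 0 - x) / Real.sin (Q 0 - x) +
        Real.cos (x - T 1) / Real.sin (x - T 1) :=
      cot_add_pos (b2 0).1 (b3 1).1 (by have := (hQT 0 1).2; linarith)
    have p3 : 0 < Real.cos (Q 1 - x) / Real.sin (Q 1 - x) +
        Real.cos (x - T 2) / Real.sin (x - T 2) :=
      cot_add_pos (b2 1).1 (b3 2).1 (by have := (hQT 1 2).2; linarith)
    have p4 : 0 < Real.cos (Q 2 - x) / Real.sin (Q 2 - x) +
        Real.cos (x - T 3) / Real.sin (x - T 3) :=
      cot_add_pos (b2 2).1 (b3 3).1 (by have := (hQT 2 3).2; linarith)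
    linarith
  -- h is strictly decreasing on the open interval
  have hanti : StrictAntiOn (hfun T Q) (Set.Ioo (Tmax T) (Mmin Q)) := by
    apply strictAntiOn_of_deriv_neg (convex_Ioo _ _)
    · intro x hx
      obtain ⟨v, hv, -⟩ := dh x hx
      exact hv.continuousAt.continuousWithinAt
    · rw [interior_Ioo]
      intro x hx
      obtain ⟨v, hv, hvneg⟩ := dh x hx
      rw [hv.deriv]; exact hvneg
  -- h(z₀) = 0
  have hz0 : hfun T Q z₀ = 0 := by
    obtain ⟨⟨b1, b1'⟩, b2, b3⟩ := bnds z₀ hz₀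
    have s1 := Real.sin_pos_of_pos_of_lt_pi b1 b1'
    have s2 := Real.sin_pos_of_pos_of_lt_pi (b2 0).1 (b2 0).2
    have s3 := Real.sin_pos_of_pos_of_lt_pi (b2 1).1 (b2 1).2
    have s4 := Real.sin_pos_of_pos_of_lt_pi (b2 2).1 (b2 2).2
    have s5 := Real.sin_pos_of_pos_of_lt_pi (b3 0).1 (b3 0).2
    have s6 := Real.sin_pos_of_pos_of_lt_pi (b3 1).1 (b3 1).2
    have s7 := Real.sin_pos_of_pos_of_lt_pi (b3 2).1 (b3 2).2
    have s8 := Real.sin_pos_of_pos_of_lt_pi (b3 3).1 (b3 3).2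
    have hden : Real.sin (z₀ - T 0) * Real.sin (z₀ - T 1) * Real.sin (z₀ - T 2) *
        Real.sin (z₀ - T 3) ≠ 0 := by positivity
    unfold gfun at hgz₀
    rw [div_eq_one_iff_eq hden] at hgz₀
    have L : Real.log (Real.sin (2 * π - z₀) * Real.sin (Q 0 - z₀) * Real.sin (Q 1 - z₀) *
        Real.sin (Q 2 - z₀)) = Real.log (Real.sin (z₀ - T 0) * Real.sin (z₀ - T 1) *
        Real.sin (z₀ - T 2) * Real.sin (z₀ - T 3)) := by rw [hgz₀]
    rw [Real.log_mul (by positivity) (ne_of_gt s4), Real.log_mul (by positivity) (ne_of_gt s3),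
      Real.log_mul (ne_of_gt s1) (ne_of_gt s2),
      Real.log_mul (by positivity) (ne_of_gt s8), Real.log_mul (by positivity) (ne_of_gt s7),
      Real.log_mul (ne_of_gt s5) (ne_of_gt s6)] at L
    unfold hfun
    rw [Real.log_mul two_ne_zero (ne_of_gt s1), Real.log_mul two_ne_zero (ne_of_gt s2),
      Real.log_mul two_ne_zero (ne_of_gt s3), Real.log_mul two_ne_zero (ne_of_gt s4),
      Real.log_mul two_ne_zero (ne_of_gt s5), Real.log_mul two_ne_zero (ne_of_gt s6),
      Real.log_mul two_ne_zero (ne_of_gt s7), Real.log_mul two_ne_zero (ne_of_gt s8)]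
    linarith
  -- conclude
  intro x hx hne
  rcases lt_or_gt_of_ne hne with hlt | hgt
  · have mono : StrictMonoOn (Ffun T Q) (Set.Icc (Tmax T) z₀) := by
      apply strictMonoOn_of_deriv_pos (convex_Icc _ _)
      · exact contF.mono (Set.Icc_subset_Icc_right hz₀.2.le)
      · rw [interior_Icc]
        intro y hy
        have hy' : y ∈ Set.Ioo (Tmax T) (Mmin Q) := ⟨hy.1, hy.2.trans hz₀.2⟩
        rw [(dF y hy').deriv]
        have : hfun T Q z₀ < hfun T Q y := hanti hy' hz₀ hy.2
        linarith
    exact mono ⟨hx.1, hlt.le⟩ ⟨hz₀.1.le, le_rfl⟩ hlt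
  · have anti : StrictAntiOn (Ffun T Q) (Set.Icc z₀ (Mmin Q)) := by
      apply strictAntiOn_of_deriv_neg (convex_Icc _ _)
      · exact contF.mono (Set.Icc_subset_Icc_left hz₀.1.le)
      · rw [interior_Icc]
        intro y hy
        have hy' : y ∈ Set.Ioo (Tmax T) (Mmin Q) := ⟨hz₀.1.trans hy.1, hy.2⟩
        rw [(dF y hy').deriv]
        have : hfun T Q y < hfun T Q z₀ := hanti hz₀ hy' hy.1
        linarith
    exact anti ⟨le_rfl, hz₀.2.le⟩ ⟨hgt.le, hx.2⟩ hgt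
end

section
/- Let T₀, T₁, T₂, T₃, Q₀, Q₁, Q₂, Q₃ be reals with 0 < Q_k − T_a < π for all a, k ∈ {0,1,2,3}. Then there exists a unique z ∈ (max_a T_a, min_k Q_k) such that ∏_{k=0}^{3} sin(Q_k − z) = ∏_{a=0}^{3} sin(z − T_a). Moreover, this unique solution depends continuously on the 8-tuple (T₀,…,T₃,Q₀,…,Q₃) on the open set of 8-tuples satisfying the stated inequalities. -/
open Real Filter Finset

noncomputable section
namespace Stmt10

def Mx (T : Fin 4 → ℝ) : ℝ := max (max (T 0) (T 1)) (max (T 2) (T 3))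
def Mn (Q : Fin 4 → ℝ) : ℝ := min (min (Q 0) (Q 1)) (min (Q 2) (Q 3))
def Pf (Q : Fin 4 → ℝ) (z : ℝ) : ℝ := ∏ k : Fin 4, Real.sin (Q k - z)
def Rf (T : Fin 4 → ℝ) (z : ℝ) : ℝ := ∏ a : Fin 4, Real.sin (z - T a)
def Ff (T Q : Fin 4 → ℝ) (z : ℝ) : ℝ := Pf Q z - Rf T z
def Gf (T Q : Fin 4 → ℝ) (z : ℝ) : ℝ :=
  (∑ k : Fin 4, Real.log (Real.sin (Q k - z))) - ∑ a : Fin 4, Real.log (Real.sin (z - T a))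
def Hyp (T Q : Fin 4 → ℝ) : Prop := ∀ a k : Fin 4, 0 < Q k - T a ∧ Q k - T a < Real.pi

lemma le_Mx (T : Fin 4 → ℝ) (a : Fin 4) : T a ≤ Mx T := by
  fin_cases a <;> simp [Mx, le_max_iff, le_refl]

lemma Mn_le (Q : Fin 4 → ℝ) (k : Fin 4) : Mn Q ≤ Q k := by
  fin_cases k <;> simp [Mn, min_le_iff, le_refl]

lemma exists_Mx (T : Fin 4 → ℝ) : ∃ a : Fin 4, T a = Mx T := by
  rcases max_choice (max (T 0) (T 1)) (max (T 2) (T 3)) with h | h <;>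
    [rcases max_choice (T 0) (T 1) with h2 | h2; rcases max_choice (T 2) (T 3) with h2 | h2] <;>
    [exact ⟨0, by rw [Mx, h, h2]⟩; exact ⟨1, by rw [Mx, h, h2]⟩;
     exact ⟨2, by rw [Mx, h, h2]⟩; exact ⟨3, by rw [Mx, h, h2]⟩]

lemma exists_Mn (Q : Fin 4 → ℝ) : ∃ k : Fin 4, Q k = Mn Q := by
  rcases min_choice (min (Q 0) (Q 1)) (min (Q 2) (Q 3)) with h | h <;>
    [rcases min_choice (Q 0) (Q 1) with h2 | h2; rcases min_choice (Q 2) (Q 3) with h2 | h2] <;>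
    [exact ⟨0, by rw [Mn, h, h2]⟩; exact ⟨1, by rw [Mn, h, h2]⟩;
     exact ⟨2, by rw [Mn, h, h2]⟩; exact ⟨3, by rw [Mn, h, h2]⟩]

variable {T Q : Fin 4 → ℝ}

lemma TltQ (h : Hyp T Q) (a k : Fin 4) : T a < Q k := by
  have := (h a k).1; linarith

lemma Mx_lt_Mn (h : Hyp T Q) : Mx T < Mn Q := by
  simp only [Mx, Mn, max_lt_iff, lt_min_iff]
  repeat' constructor
  all_goals exact TltQ h _ _

lemma sinQ_pos (h : Hyp T Q) {z : ℝ} (h1 : Mx T ≤ z) (h2 : z < Mn Q) (k : Fin 4) :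
    0 < Real.sin (Q k - z) := by
  apply Real.sin_pos_of_pos_of_lt_pi
  · have := Mn_le Q k; linarith
  · have := le_Mx T 0; have := (h 0 k).2; linarith

lemma sinT_pos (h : Hyp T Q) {z : ℝ} (h1 : Mx T < z) (h2 : z ≤ Mn Q) (a : Fin 4) :
    0 < Real.sin (z - T a) := by
  apply Real.sin_pos_of_pos_of_lt_pi
  · have := le_Mx T a; linarith
  · have := Mn_le Q 0; have := (h a 0).2; linarith

lemma Pf_pos (h : Hyp T Q) {z : ℝ} (h1 : Mx T ≤ z) (h2 : z < Mn Q) : 0 < Pf Q z :=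
  Finset.prod_pos fun k _ => sinQ_pos h h1 h2 k

lemma Rf_pos (h : Hyp T Q) {z : ℝ} (h1 : Mx T < z) (h2 : z ≤ Mn Q) : 0 < Rf T z :=
  Finset.prod_pos fun a _ => sinT_pos h h1 h2 a

lemma Rf_Mx (T : Fin 4 → ℝ) : Rf T (Mx T) = 0 := by
  obtain ⟨a, ha⟩ := exists_Mx T
  exact Finset.prod_eq_zero (Finset.mem_univ a) (by rw [ha, sub_self, Real.sin_zero])

lemma Pf_Mn (Q : Fin 4 → ℝ) : Pf Q (Mn Q) = 0 := by
  obtain ⟨k, hk⟩ := exists_Mn Q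
  exact Finset.prod_eq_zero (Finset.mem_univ k) (by rw [hk, sub_self, Real.sin_zero])

lemma Ff_cont (T Q : Fin 4 → ℝ) : Continuous (Ff T Q) := by
  unfold Ff Pf Rf
  fun_prop


lemma Gf_hasDeriv (h : Hyp T Q) {z : ℝ} (hz : z ∈ Set.Ioo (Mx T) (Mn Q)) :
    HasDerivAt (Gf T Q)
      (-(∑ k : Fin 4, (Real.cos (Q k - z) / Real.sin (Q k - z) +
          Real.cos (z - T k) / Real.sin (z - T k)))) z := by
  obtain ⟨hz1, hz2⟩ := hz
  have hk : ∀ k : Fin 4, HasDerivAt (fun z => Real.log (Real.sin (Q k - z)))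
      (Real.cos (Q k - z) * (-1) / Real.sin (Q k - z)) z := fun k => by
    have h1 : HasDerivAt (fun z : ℝ => Q k - z) (-1) z := by
      simpa using (hasDerivAt_id z).const_sub (Q k)
    exact (h1.sin).log (ne_of_gt (sinQ_pos h hz1.le hz2 k))
  have ha : ∀ a : Fin 4, HasDerivAt (fun z => Real.log (Real.sin (z - T a)))
      (Real.cos (z - T a) * 1 / Real.sin (z - T a)) z := fun a => by
    have h1 : HasDerivAt (fun z : ℝ => z - T a) 1 z := by
      simpa using (hasDerivAt_id z).sub_const (T a)
    exact (h1.sin).log (ne_of_gt (sinT_pos h hz1 hz2.le a))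
  have hd := (HasDerivAt.fun_sum (fun k (_ : k ∈ Finset.univ) => hk k)).sub
    (HasDerivAt.fun_sum (fun a (_ : a ∈ Finset.univ) => ha a))
  have e1 : ∀ k : Fin 4, Real.cos (Q k - z) * (-1) / Real.sin (Q k - z)
      = -(Real.cos (Q k - z) / Real.sin (Q k - z)) := fun k => by ring
  have e2 : ∀ a : Fin 4, Real.cos (z - T a) * 1 / Real.sin (z - T a)
      = Real.cos (z - T a) / Real.sin (z - T a) := fun a => by ring
  simp only [e1, e2, Finset.sum_neg_distrib] at hd
  refine hd.congr_deriv ?_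
  rw [Finset.sum_add_distrib]
  ring

lemma cot_add_pos {u v : ℝ} (hu1 : 0 < u) (hu2 : u < Real.pi) (hv1 : 0 < v)
    (hv2 : v < Real.pi) (huv : u + v < Real.pi) :
    0 < Real.cos u / Real.sin u + Real.cos v / Real.sin v := by
  have hsu := Real.sin_pos_of_pos_of_lt_pi hu1 hu2
  have hsv := Real.sin_pos_of_pos_of_lt_pi hv1 hv2
  rw [div_add_div _ _ (ne_of_gt hsu) (ne_of_gt hsv)]
  apply div_pos
  · have := Real.sin_pos_of_pos_of_lt_pi (by linarith : (0:ℝ) < u + v) huv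
    rw [Real.sin_add] at this
    linarith
  · exact mul_pos hsu hsv

lemma Gf_anti (h : Hyp T Q) : StrictAntiOn (Gf T Q) (Set.Ioo (Mx T) (Mn Q)) := by
  apply strictAntiOn_of_deriv_neg (convex_Ioo _ _)
  · intro z hz
    exact (Gf_hasDeriv h hz).continuousAt.continuousWithinAt
  · intro z hz
    rw [interior_Ioo] at hz
    rw [(Gf_hasDeriv h hz).deriv, neg_lt_zero]
    apply Finset.sum_pos _ Finset.univ_nonempty
    intro k _
    obtain ⟨hz1, hz2⟩ := hz
    have h1 := Mn_le Q k
    have h2 := le_Mx T k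
    have h3 := le_Mx T 0
    have h4 := Mn_le Q 0
    have h5 := (h 0 k).2
    have h6 := (h k 0).2
    have h7 := (h k k).2
    exact cot_add_pos (by linarith) (by linarith) (by linarith) (by linarith) (by linarith)

lemma Gf_eq (h : Hyp T Q) {z : ℝ} (hz : z ∈ Set.Ioo (Mx T) (Mn Q)) :
    Gf T Q z = Real.log (Pf Q z) - Real.log (Rf T z) := by
  rw [Gf, Pf, Rf, Real.log_prod (fun k _ => ne_of_gt (sinQ_pos h hz.1.le hz.2 k)),
    Real.log_prod (fun a _ => ne_of_gt (sinT_pos h hz.1 hz.2.le a))]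

lemma key (T Q : Fin 4 → ℝ) (h : Hyp T Q) :
    ∃ z, z ∈ Set.Ioo (Mx T) (Mn Q) ∧ Ff T Q z = 0 ∧
      ∀ z' ∈ Set.Ioo (Mx T) (Mn Q), Ff T Q z' = 0 → z' = z := by
  have hlt := Mx_lt_Mn h
  have hFM : 0 < Ff T Q (Mx T) := by
    rw [Ff, Rf_Mx, sub_zero]; exact Pf_pos h le_rfl hlt
  have hFm : Ff T Q (Mn Q) < 0 := by
    rw [Ff, Pf_Mn, zero_sub, neg_lt_zero]; exact Rf_pos h hlt le_rfl
  have hmem : (0:ℝ) ∈ Set.Icc (Ff T Q (Mn Q)) (Ff T Q (Mx T)) := ⟨hFm.le, hFM.le⟩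
  obtain ⟨z, hzIcc, hz0⟩ := intermediate_value_Icc' hlt.le (Ff_cont T Q).continuousOn hmem
  have hne1 : z ≠ Mx T := fun e => absurd hz0 (by rw [e]; exact ne_of_gt hFM)
  have hne2 : z ≠ Mn Q := fun e => absurd hz0 (by rw [e]; exact ne_of_lt hFm)
  have hzI : z ∈ Set.Ioo (Mx T) (Mn Q) :=
    ⟨lt_of_le_of_ne hzIcc.1 (Ne.symm hne1), lt_of_le_of_ne hzIcc.2 hne2⟩
  refine ⟨z, hzI, hz0, ?_⟩
  intro z' hz' hF'
  have hG : ∀ w ∈ Set.Ioo (Mx T) (Mn Q), Ff T Q w = 0 → Gf T Q w = 0 := by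
    intro w hw hFw
    rw [Gf_eq h hw, sub_eq_zero]
    rw [Ff, sub_eq_zero] at hFw
    rw [hFw]
  exact (Gf_anti h).injOn hz' hzI (by rw [hG z' hz' hF', hG z hzI hz0])


open Classical in
def Zf (T Q : Fin 4 → ℝ) : ℝ :=
  if h : Hyp T Q then (key T Q h).choose else 0

lemma Zf_spec (h : Hyp T Q) :
    Zf T Q ∈ Set.Ioo (Mx T) (Mn Q) ∧ Ff T Q (Zf T Q) = 0 ∧
      ∀ z' ∈ Set.Ioo (Mx T) (Mn Q), Ff T Q z' = 0 → z' = Zf T Q := by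
  rw [Zf]
  rw [dif_pos h]
  exact (key T Q h).choose_spec

lemma Zf_contOn : ContinuousOn (fun p : (Fin 4 → ℝ) × (Fin 4 → ℝ) => Zf p.1 p.2)
    {p : (Fin 4 → ℝ) × (Fin 4 → ℝ) | Hyp p.1 p.2} := by
  intro p₀ hp₀
  have hp₀' : Hyp p₀.1 p₀.2 := hp₀
  rw [Metric.continuousWithinAt_iff]
  intro ε hε
  obtain ⟨hzI₀, hz0₀, huniq₀⟩ := Zf_spec hp₀'
  set z₀ := Zf p₀.1 p₀.2 with hz₀def
  set ε' : ℝ := min (ε/2) (min ((z₀ - Mx p₀.1)/2) ((Mn p₀.2 - z₀)/2)) with hε'def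
  have hεhalf : ε' ≤ ε/2 := min_le_left _ _
  have hεu : ε' ≤ (z₀ - Mx p₀.1)/2 := le_trans (min_le_right _ _) (min_le_left _ _)
  have hεv : ε' ≤ (Mn p₀.2 - z₀)/2 := le_trans (min_le_right _ _) (min_le_right _ _)
  have hε'pos : 0 < ε' := by
    apply lt_min (by linarith)
    exact lt_min (by linarith [hzI₀.1]) (by linarith [hzI₀.2])
  set u : ℝ := z₀ - ε' with hudef
  set v : ℝ := z₀ + ε' with hvdef
  have huI : u ∈ Set.Ioo (Mx p₀.1) (Mn p₀.2) := ⟨by simp only [hudef]; linarith [hzI₀.1],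
    by simp only [hudef]; linarith [hzI₀.2]⟩
  have hvI : v ∈ Set.Ioo (Mx p₀.1) (Mn p₀.2) := ⟨by simp only [hvdef]; linarith [hzI₀.1],
    by simp only [hvdef]; linarith [hzI₀.2]⟩
  have hGz₀ : Gf p₀.1 p₀.2 z₀ = 0 := by
    rw [Gf_eq hp₀' hzI₀, sub_eq_zero]
    rw [Ff, sub_eq_zero] at hz0₀
    rw [hz0₀]
  have hGu : 0 < Gf p₀.1 p₀.2 u := by
    have := (Gf_anti hp₀') huI hzI₀ (by simp only [hudef]; linarith)
    rw [hGz₀] at this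
    exact this
  have hGv : Gf p₀.1 p₀.2 v < 0 := by
    have := (Gf_anti hp₀') hzI₀ hvI (by simp only [hvdef]; linarith)
    rw [hGz₀] at this
    exact this
  have hFu : 0 < Ff p₀.1 p₀.2 u := by
    rw [Ff, sub_pos]
    rw [Gf_eq hp₀' huI, sub_pos] at hGu
    exact (Real.log_lt_log_iff (Rf_pos hp₀' huI.1 huI.2.le) (Pf_pos hp₀' huI.1.le huI.2)).mp hGu
  have hFv : Ff p₀.1 p₀.2 v < 0 := by
    rw [Ff, sub_neg]
    rw [Gf_eq hp₀' hvI, sub_neg] at hGv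
    exact (Real.log_lt_log_iff (Pf_pos hp₀' hvI.1.le hvI.2) (Rf_pos hp₀' hvI.1 hvI.2.le)).mp hGv
  have hcont1 : Continuous (fun p : (Fin 4 → ℝ) × (Fin 4 → ℝ) => Ff p.1 p.2 u) := by
    unfold Ff Pf Rf; fun_prop
  have hcont2 : Continuous (fun p : (Fin 4 → ℝ) × (Fin 4 → ℝ) => Ff p.1 p.2 v) := by
    unfold Ff Pf Rf; fun_prop
  have hcontM : Continuous (fun p : (Fin 4 → ℝ) × (Fin 4 → ℝ) => Mx p.1) := by
    unfold Mx; fun_prop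
  have hcontm : Continuous (fun p : (Fin 4 → ℝ) × (Fin 4 → ℝ) => Mn p.2) := by
    unfold Mn; fun_prop
  have hU : IsOpen {p : (Fin 4 → ℝ) × (Fin 4 → ℝ) |
      0 < Ff p.1 p.2 u ∧ Ff p.1 p.2 v < 0 ∧ Mx p.1 < u ∧ v < Mn p.2} := by
    exact ((isOpen_lt continuous_const hcont1).inter ((isOpen_lt hcont2 continuous_const).inter
      ((isOpen_lt hcontM continuous_const).inter (isOpen_lt continuous_const hcontm))))
  have hp₀U : p₀ ∈ {p : (Fin 4 → ℝ) × (Fin 4 → ℝ) |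
      0 < Ff p.1 p.2 u ∧ Ff p.1 p.2 v < 0 ∧ Mx p.1 < u ∧ v < Mn p.2} :=
    ⟨hFu, hFv, huI.1, hvI.2⟩
  obtain ⟨δ, hδpos, hball⟩ := Metric.isOpen_iff.mp hU p₀ hp₀U
  refine ⟨δ, hδpos, ?_⟩
  intro p hpS hpd
  have hpS' : Hyp p.1 p.2 := hpS
  obtain ⟨hFu', hFv', hMu', hvm'⟩ := hball (Metric.mem_ball.mpr hpd)
  have huv : u ≤ v := by simp only [hudef, hvdef]; linarith
  obtain ⟨w, hwIcc, hw0⟩ := intermediate_value_Icc' huv (Ff_cont p.1 p.2).continuousOn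
    (⟨hFv'.le, hFu'.le⟩ : (0:ℝ) ∈ Set.Icc (Ff p.1 p.2 v) (Ff p.1 p.2 u))
  have hwne1 : w ≠ u := fun e => absurd hw0 (by rw [e]; exact ne_of_gt hFu')
  have hwne2 : w ≠ v := fun e => absurd hw0 (by rw [e]; exact ne_of_lt hFv')
  have hwuv : w ∈ Set.Ioo u v :=
    ⟨lt_of_le_of_ne hwIcc.1 (Ne.symm hwne1), lt_of_le_of_ne hwIcc.2 hwne2⟩
  have hwI : w ∈ Set.Ioo (Mx p.1) (Mn p.2) :=
    ⟨lt_trans hMu' hwuv.1, lt_trans hwuv.2 hvm'⟩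
  obtain ⟨_, _, huniq⟩ := Zf_spec hpS'
  have hwZ : w = Zf p.1 p.2 := huniq w hwI hw0
  rw [Real.dist_eq, ← hwZ, abs_lt]
  have h1 : u < w := hwuv.1
  have h2 : w < v := hwuv.2
  constructor <;> simp only [hudef, hvdef] at h1 h2 <;> linarith

end Stmt10

/-- for reals `T₀,…,T₃, Q₀,…,Q₃` with `0 < Q_k − T_a < π` for all `a, k`,
there is a unique `z ∈ (max_a T_a, min_k Q_k)` with `∏_k sin(Q_k − z) = ∏_a sin(z − T_a)`;
moreover this root depends continuously on the 8-tuple `(T, Q)` on the open set of tuples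
satisfying the inequalities. -/
theorem exists_unique_root_and_continuous_dependence :
    ∃ Z : (Fin 4 → ℝ) → (Fin 4 → ℝ) → ℝ,
      (∀ T Q : Fin 4 → ℝ, (∀ a k : Fin 4, 0 < Q k - T a ∧ Q k - T a < Real.pi) →
        (Z T Q ∈ Set.Ioo (max (max (T 0) (T 1)) (max (T 2) (T 3)))
            (min (min (Q 0) (Q 1)) (min (Q 2) (Q 3))) ∧
          (∏ k : Fin 4, Real.sin (Q k - Z T Q)) = (∏ a : Fin 4, Real.sin (Z T Q - T a)) ∧
          ∀ z ∈ Set.Ioo (max (max (T 0) (T 1)) (max (T 2) (T 3)))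
              (min (min (Q 0) (Q 1)) (min (Q 2) (Q 3))),
            (∏ k : Fin 4, Real.sin (Q k - z)) = (∏ a : Fin 4, Real.sin (z - T a)) →
              z = Z T Q)) ∧
      ContinuousOn (fun p : (Fin 4 → ℝ) × (Fin 4 → ℝ) => Z p.1 p.2)
        {p : (Fin 4 → ℝ) × (Fin 4 → ℝ) |
          ∀ a k : Fin 4, 0 < p.2 k - p.1 a ∧ p.2 k - p.1 a < Real.pi} := by
  refine ⟨Stmt10.Zf, ?_, Stmt10.Zf_contOn⟩
  intro T Q h
  obtain ⟨hI, hF, huniq⟩ := Stmt10.Zf_spec (T := T) (Q := Q) h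
  refine ⟨hI, ?_, ?_⟩
  · rw [Stmt10.Ff, sub_eq_zero] at hF
    exact hF
  · intro z hz hzeq
    exact huniq z hz (by rw [Stmt10.Ff, sub_eq_zero]; exact hzeq)
end
end
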